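/- arXiv:2105.09283 — 8 statements merged into one kernel-verified Lean document; each statement's English description precedes it below -/
import Mathlib

section
/- Let p be a complex polynomial of degree n of the form p(z) = z·∏_{k=1}^{n-1}(z − z_k), where z_1, …, z_{n-1} are complex numbers with |z_k| ≥ 1 for all k. Then p has no critical point in the open ball B(0, 1/n); that is, p'(z) ≠ 0 for every z ∈ ℂ with |z| < 1/n. -/
open Polynomial in
theorem my_derivative_prod {ι : Type*} [DecidableEq ι] (s : Finset ι) (f : ι → Polynomial ℂ) :
    Polynomial.derivative (∏ i ∈ s, f i)
      = ∑ i ∈ s, (∏ j ∈ s.erase i, f j) * Polynomial.derivative (f i) := by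
  induction s using Finset.induction_on with
  | empty => simp
  | @insert a s ha ih =>
    rw [Finset.prod_insert ha, Polynomial.derivative_mul, ih, Finset.sum_insert ha,
      Finset.erase_insert ha, Finset.mul_sum, mul_comm (Polynomial.derivative (f a))]
    congr 1
    apply Finset.sum_congr rfl
    intro i hi
    rw [Finset.erase_insert_of_ne (by rintro rfl; exact ha hi),
      Finset.prod_insert (fun h => ha (Finset.mem_of_mem_erase h)), mul_assoc]

open Polynomial in
theorem aziz_zargar (n : ℕ) (hn : 1 ≤ n) (z : Fin (n - 1) → ℂ)
    (hz : ∀ k, 1 ≤ ‖z k‖) :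
    ∀ w : ℂ, ‖w‖ < 1 / n →
      (Polynomial.derivative
        (Polynomial.X * ∏ k, (Polynomial.X - Polynomial.C (z k)))).eval w ≠ 0 := by
  intro w hw
  have hnR : (1:ℝ) ≤ n := by exact_mod_cast hn
  have hr1 : ‖w‖ < 1 := lt_of_lt_of_le hw (by
    rw [div_le_one (by linarith)]; exact hnR)
  have habs : ∀ k, 1 - ‖w‖ ≤ ‖w - z k‖ := by
    intro k
    have h1 : ‖z k‖ - ‖w‖ ≤ ‖z k - w‖ := by
      have := norm_sub_norm_le (z k) w
      simpa using this
    have h2 : ‖z k - w‖ = ‖w - z k‖ := norm_sub_rev _ _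
    have := hz k
    linarith
  have hne : ∀ k, w - z k ≠ 0 := by
    intro k h
    have := habs k
    rw [h, norm_zero] at this
    linarith
  have hP : (∏ k, (w - z k)) ≠ 0 := Finset.prod_ne_zero_iff.mpr fun k _ => hne k
  have hq' : (Polynomial.derivative (∏ k, (X - C (z k)))).eval w
      = (∏ k, (w - z k)) * ∑ k, (w - z k)⁻¹ := by
    rw [my_derivative_prod]
    rw [Polynomial.eval_finset_sum, Finset.mul_sum]
    apply Finset.sum_congr rfl
    intro k _
    rw [Polynomial.derivative_sub, Polynomial.derivative_X, Polynomial.derivative_C,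
      sub_zero, mul_one, Polynomial.eval_prod]
    simp only [Polynomial.eval_sub, Polynomial.eval_X, Polynomial.eval_C]
    rw [eq_comm, mul_comm (∏ k, (w - z k)), inv_mul_eq_div, div_eq_iff (hne k), mul_comm]
    exact (Finset.mul_prod_erase _ _ (Finset.mem_univ k)).symm
  have hsum : ‖w * ∑ k, (w - z k)⁻¹‖ < 1 := by
    have hpos : (0:ℝ) < 1 - ‖w‖ := by linarith
    have h1 : ∀ k : Fin (n-1), ‖(w - z k)⁻¹‖ ≤ 1/(1 - ‖w‖) := by
      intro k
      rw [norm_inv, one_div]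
      exact inv_anti₀ hpos (habs k)
    calc ‖w * ∑ k, (w - z k)⁻¹‖
        ≤ ‖w‖ * ∑ k, ‖(w - z k)⁻¹‖ := by
          rw [norm_mul]
          exact mul_le_mul_of_nonneg_left (norm_sum_le _ _) (norm_nonneg w)
      _ ≤ ‖w‖ * ((n - 1 : ℕ) * (1/(1 - ‖w‖))) := by
          apply mul_le_mul_of_nonneg_left _ (norm_nonneg w)
          calc ∑ k : Fin (n-1), ‖(w - z k)⁻¹‖
              ≤ (Finset.univ : Finset (Fin (n-1))).card • (1/(1 - ‖w‖)) :=
                Finset.sum_le_card_nsmul _ _ _ (fun k _ => h1 k)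
            _ = (n - 1 : ℕ) * (1/(1 - ‖w‖)) := by
                rw [Finset.card_univ, Fintype.card_fin, nsmul_eq_mul]
      _ < 1 := by
          have hcast : ((n - 1 : ℕ) : ℝ) = (n:ℝ) - 1 := by
            rw [Nat.cast_sub hn, Nat.cast_one]
          have hwn : ‖w‖ * n < 1 := by
            rw [lt_div_iff₀ (by linarith : (0:ℝ) < n)] at hw
            linarith
          have hnn : (0:ℝ) ≤ ‖w‖ := norm_nonneg w
          rw [hcast, show ‖w‖ * (((n:ℝ) - 1) * (1/(1 - ‖w‖)))
              = ‖w‖ * ((n:ℝ) - 1) / (1 - ‖w‖) from by ring,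
            div_lt_one hpos]
          nlinarith
  rw [Polynomial.derivative_mul, Polynomial.derivative_X, one_mul, Polynomial.eval_add,
    Polynomial.eval_mul, Polynomial.eval_X, hq', Polynomial.eval_prod]
  simp only [Polynomial.eval_sub, Polynomial.eval_X, Polynomial.eval_C]
  rw [← mul_assoc, mul_comm w, mul_assoc, ← mul_one_add]
  apply mul_ne_zero hP
  intro h
  have h2 : ‖w * ∑ k, (w - z k)⁻¹‖ = 1 := by
    have h3 : w * ∑ k, (w - z k)⁻¹ = -1 := by linear_combination h
    rw [h3]; simp
  linarith
end

section
/- Let m and n be integers with 1 ≤ m ≤ n, and let p be a complex polynomial of the form p(z) = z^m·∏_{k=1}^{n-m}(z − z_k), where z_1, …, z_{n-m} are complex numbers with |z_k| ≥ 1 for all k. Then for every integer j with 1 ≤ j ≤ m, the j-th derivative p^{(j)} has no zero z satisfying 0 < |z| < ∏_{k=0}^{j-1} (m−k)/(n−k) = (m(m−1)⋯(m−j+1))/(n(n−1)⋯(n−j+1)). -/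
open Polynomial Finset

lemma fin_derivative_prod {ι : Type*} [DecidableEq ι] (s : Finset ι) (f : ι → ℂ[X]) :
    derivative (∏ i ∈ s, f i) = ∑ i ∈ s, (∏ j ∈ s.erase i, f j) * derivative (f i) := by
  simp only [Finset.prod_eq_multiset_prod, Finset.sum_eq_multiset_sum]
  rw [derivative_prod]
  congr 1

lemma lemB (m s : ℕ) (hm : 1 ≤ m) (z : Fin s → ℂ) (hz : ∀ k, 1 ≤ ‖z k‖)
    (x : ℂ) (hx : ‖x‖ * (m + s) < m) :
    (m : ℂ) * Polynomial.eval x (∏ k, (X - C (z k)))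
      + x * Polynomial.eval x (derivative (∏ k, (X - C (z k)))) ≠ 0 := by
  set t := ‖x‖ with ht
  have ht0 : 0 ≤ t := norm_nonneg x
  have hms : (1:ℝ) ≤ (m:ℝ) := by exact_mod_cast hm
  have ht1 : t < 1 := by nlinarith [Nat.cast_nonneg (α := ℝ) s]
  have hfac : ∀ k, 1 - t ≤ ‖x - z k‖ := by
    intro k
    have h1 : ‖z k‖ ≤ ‖x - z k‖ + ‖x‖ := by
      calc ‖z k‖ = ‖-(x - z k) + x‖ := by congr 1; ring
        _ ≤ ‖-(x - z k)‖ + ‖x‖ := norm_add_le _ _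
        _ = ‖x - z k‖ + ‖x‖ := by rw [norm_neg]
    have := hz k
    linarith
  have hev : Polynomial.eval x (∏ k : Fin s, (X - C (z k))) = ∏ k : Fin s, (x - z k) := by
    simp [eval_prod]
  have hG : ‖Polynomial.eval x (∏ k : Fin s, (X - C (z k)))‖
      = ∏ k : Fin s, ‖x - z k‖ := by
    rw [hev, norm_prod]
  set G := ∏ k : Fin s, ‖x - z k‖ with hGdef
  have hGpos : 0 < G := Finset.prod_pos fun k _ => lt_of_lt_of_le (by linarith) (hfac k)
  -- derivative eval bound
  have hder : Polynomial.eval x (derivative (∏ k : Fin s, (X - C (z k))))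
      = ∑ k : Fin s, ∏ j ∈ Finset.univ.erase k, (x - z j) := by
    rw [fin_derivative_prod]
    simp [eval_finset_sum, eval_prod]
  have herase : ∀ k : Fin s, (1 - t) * ∏ j ∈ Finset.univ.erase k, ‖x - z j‖ ≤ G := by
    intro k
    calc (1 - t) * ∏ j ∈ Finset.univ.erase k, ‖x - z j‖
        ≤ ‖x - z k‖ * ∏ j ∈ Finset.univ.erase k, ‖x - z j‖ := by
          apply mul_le_mul_of_nonneg_right (hfac k)
          exact Finset.prod_nonneg fun j _ => norm_nonneg _
      _ = G := by rw [hGdef, ← Finset.mul_prod_erase _ _ (Finset.mem_univ k)]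
  have hsum : ‖x * Polynomial.eval x (derivative (∏ k : Fin s, (X - C (z k))))‖
      ≤ t * (s * (G / (1 - t))) := by
    rw [norm_mul, hder]
    apply mul_le_mul_of_nonneg_left _ ht0
    calc ‖∑ k : Fin s, ∏ j ∈ Finset.univ.erase k, (x - z j)‖
        ≤ ∑ k : Fin s, ‖∏ j ∈ Finset.univ.erase k, (x - z j)‖ :=
          norm_sum_le _ _
      _ ≤ ∑ _k : Fin s, G / (1 - t) := by
          apply Finset.sum_le_sum
          intro k _
          rw [norm_prod]
          rw [le_div_iff₀ (by linarith)]
          calc (∏ j ∈ Finset.univ.erase k, ‖x - z j‖) * (1 - t)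
              = (1 - t) * ∏ j ∈ Finset.univ.erase k, ‖x - z j‖ := by ring
            _ ≤ G := herase k
      _ = s * (G / (1 - t)) := by simp [Finset.sum_const, Finset.card_univ, mul_comm]
  intro hcon
  have hA : ‖(m:ℂ) * Polynomial.eval x (∏ k : Fin s, (X - C (z k)))‖ = m * G := by
    rw [norm_mul, hG, Complex.norm_natCast]
  have htri : ‖(m:ℂ) * Polynomial.eval x (∏ k : Fin s, (X - C (z k)))‖
      ≤ ‖x * Polynomial.eval x (derivative (∏ k : Fin s, (X - C (z k))))‖ := by
    have : (m:ℂ) * Polynomial.eval x (∏ k : Fin s, (X - C (z k)))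
        = -(x * Polynomial.eval x (derivative (∏ k : Fin s, (X - C (z k))))) := by
      linear_combination hcon
    rw [this, norm_neg]
  rw [hA] at htri
  have hlt : t * (s * (G / (1 - t))) < m * G := by
    rw [div_eq_mul_inv]
    have h1t : (0:ℝ) < 1 - t := by linarith
    rw [show t * ((s:ℝ) * (G * (1 - t)⁻¹)) = (t * s * G) * (1-t)⁻¹ by ring,
      show (m:ℝ) * G = ((m:ℝ) * G * (1 - t)) * (1-t)⁻¹ by field_simp]
    apply mul_lt_mul_of_pos_right _ (inv_pos.mpr h1t)
    nlinarith
  linarith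

lemma lemA (m s : ℕ) (hm : 1 ≤ m) (a : ℂ) (ha : a ≠ 0) (z : Fin s → ℂ)
    (hz : ∀ k, 1 ≤ ‖z k‖) :
    ∃ w : Fin s → ℂ, (∀ k, (m : ℝ) / (m + s) ≤ ‖w k‖) ∧
      derivative (C a * X ^ m * ∏ k, (X - C (z k)))
        = C (a * ((m + s : ℕ) : ℂ)) * X ^ (m - 1) * ∏ k, (X - C (w k)) := by
  set g : ℂ[X] := ∏ k : Fin s, (X - C (z k)) with hgdef
  have hgmonic : g.Monic := monic_prod_of_monic _ _ fun k _ => monic_X_sub_C (z k)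
  have hgdeg : g.natDegree = s := by
    rw [hgdef, natDegree_prod _ _ fun k _ => X_sub_C_ne_zero (z k)]
    simp [natDegree_X_sub_C]
  set h₀ : ℂ[X] := C (m : ℂ) * g + X * derivative g with hh₀
  -- step 1 : derivative p = C a * X^(m-1) * h₀
  have hstep1 : derivative (C a * X ^ m * g) = C a * X ^ (m - 1) * h₀ := by
    rw [derivative_mul, derivative_mul, derivative_C, derivative_X_pow, hh₀]
    have hX : X ^ (m - 1) * X = (X ^ m : ℂ[X]) := by
      rw [← pow_succ, Nat.sub_add_cancel hm]
    rw [mul_add, ← hX]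
    push_cast
    ring
  -- step 2 : coeff and degree of h₀
  have hcoeff : h₀.coeff s = ((m + s : ℕ) : ℂ) := by
    rcases Nat.eq_zero_or_pos s with hs | hs
    · subst hs
      have : g = 1 := by
        rw [hgdef]
        simp [Finset.univ_eq_empty]
      rw [hh₀, this]
      simp
    · obtain ⟨k, rfl⟩ := Nat.exists_eq_succ_of_ne_zero hs.ne'
      rw [hh₀, coeff_add, coeff_C_mul, coeff_X_mul, coeff_derivative]
      have h1 : g.coeff (k + 1) = 1 := by
        rw [show k + 1 = g.natDegree from hgdeg.symm]; exact hgmonic.coeff_natDegree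
      rw [h1]
      push_cast
      ring
  have hcne : ((m + s : ℕ) : ℂ) ≠ 0 := Nat.cast_ne_zero.mpr (by omega)
  have hdegle : h₀.natDegree ≤ s := by
    rw [hh₀]
    apply le_trans (natDegree_add_le _ _)
    apply max_le
    · exact le_trans (natDegree_mul_le) (by simp [hgdeg])
    · rcases eq_or_ne (derivative g) 0 with hd | hd
      · simp [hd]
      · apply le_trans (natDegree_mul_le)
        have h2 := natDegree_derivative_le g
        rw [hgdeg] at h2
        have hs : 1 ≤ s := by
          by_contra hs
          push_neg at hs
          have hs0 : s = 0 := by omega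
          rw [hs0] at hgdeg
          exact hd (by rw [hgmonic.natDegree_eq_zero.mp hgdeg]; simp)
        simp only [natDegree_X]
        omega
  have hdeg : h₀.natDegree = s :=
    le_antisymm hdegle (le_natDegree_of_ne_zero (by rw [hcoeff]; exact hcne))
  have hlead : h₀.leadingCoeff = ((m + s : ℕ) : ℂ) := by
    rw [leadingCoeff, hdeg, hcoeff]
  have hne : h₀ ≠ 0 := fun h => hcne (by rw [← hlead, h, leadingCoeff_zero])
  have hsplits : h₀.Splits := IsAlgClosed.splits h₀
  have hcard : h₀.roots.card = s := by
    rw [splits_iff_card_roots.mp hsplits, hdeg]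
  have hrootsbd : ∀ x ∈ h₀.roots, (m : ℝ) / (m + s) ≤ ‖x‖ := by
    intro x hx
    have hev : h₀.eval x = 0 := (mem_roots hne).mp hx
    rw [hh₀] at hev
    simp only [eval_add, eval_mul, eval_C, eval_X] at hev
    by_contra hcon
    push_neg at hcon
    have hpos : (0:ℝ) < (m:ℝ) + s := by positivity
    exact lemB m s hm z hz x ((lt_div_iff₀ hpos).mp hcon) hev
  -- extract root function
  have hfin : ∃ w : Fin s → ℂ,
      (∀ k, w k ∈ h₀.roots) ∧ (∏ k, (X - C (w k))) = (h₀.roots.map fun r => X - C r).prod := by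
    obtain ⟨L, hL⟩ : ∃ L : List ℂ, h₀.roots = ↑L := ⟨h₀.roots.toList, (Multiset.coe_toList _).symm⟩
    have hlen : L.length = s := by rw [← hcard, hL]; simp
    subst hlen
    refine ⟨fun i => L.get i, fun k => by rw [hL]; exact Multiset.mem_coe.mpr (L.get_mem k), ?_⟩
    rw [hL]
    simp only [Multiset.map_coe, Multiset.prod_coe]
    exact Fin.prod_univ_fun_getElem L fun r => X - C r
  obtain ⟨w, hwmem, hwprod⟩ := hfin
  refine ⟨w, fun k => hrootsbd _ (hwmem k), ?_⟩
  have hfact : h₀ = C ((m + s : ℕ) : ℂ) * ∏ k, (X - C (w k)) := by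
    conv_lhs => rw [hsplits.eq_prod_roots]
    rw [hlead, ← hwprod]
  rw [hstep1, hfact, C_mul]
  ring

lemma iter_deriv_comp (c : ℂ) (j : ℕ) (p : ℂ[X]) :
    derivative^[j] (p.comp (C c * X)) = C (c ^ j) * (derivative^[j] p).comp (C c * X) := by
  induction j generalizing p with
  | zero => simp
  | succ j ih =>
    rw [Function.iterate_succ_apply', Function.iterate_succ_apply', ih, derivative_mul,
      derivative_C, derivative_comp]
    simp only [derivative_mul, derivative_C, derivative_X, zero_mul, mul_one, zero_add]
    rw [pow_succ, C_mul]
    ring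

lemma key (j : ℕ) : ∀ (m : ℕ) {s : ℕ} (a : ℂ), a ≠ 0 → j ≤ m → ∀ (z : Fin s → ℂ),
    (∀ k, 1 ≤ ‖z k‖) →
    ∀ w : ℂ, 0 < ‖w‖ →
      ‖w‖ < ∏ k ∈ Finset.range j, (((m : ℝ) - k) / (((m + s : ℕ) : ℝ) - k)) →
      Polynomial.eval w (derivative^[j] (C a * X ^ m * ∏ k, (X - C (z k)))) ≠ 0 := by
  induction j with
  | zero =>
    intro m s a ha _ z hz w hw hw1
    simp only [Finset.range_zero, Finset.prod_empty] at hw1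
    simp only [Function.iterate_zero, id_eq, eval_mul, eval_pow, eval_C, eval_X, eval_prod,
      eval_sub]
    refine mul_ne_zero (mul_ne_zero ha (pow_ne_zero _ ?_)) (Finset.prod_ne_zero_iff.mpr ?_)
    · intro h; rw [h] at hw; simp at hw
    · intro k _
      intro h
      have h2 := hz k
      have : ‖w - z k‖ = 0 := by rw [h]; simp
      have h3 : ‖z k‖ ≤ ‖w - z k‖ + ‖w‖ := by
        calc ‖z k‖ = ‖-(w - z k) + w‖ := by congr 1; ring
          _ ≤ ‖-(w - z k)‖ + ‖w‖ := norm_add_le _ _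
          _ = ‖w - z k‖ + ‖w‖ := by rw [norm_neg]
      rw [this] at h3
      linarith
  | succ j ih =>
    intro m s a ha hjm z hz w hw hwR
    have hm1 : 1 ≤ m := le_trans (Nat.le_add_left 1 j) hjm
    obtain ⟨v, hv, hd⟩ := lemA m s hm1 a ha z hz
    set n : ℕ := m + s with hn
    have hnpos : (0:ℝ) < (n:ℝ) := by
      have : 0 < n := by omega
      exact_mod_cast this
    have hmpos : (0:ℝ) < (m:ℝ) := by exact_mod_cast hm1
    set c : ℂ := (m : ℂ) / (n : ℂ) with hc
    have habsc : ‖c‖ = (m : ℝ) / (n : ℝ) := by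
      rw [hc, norm_div, Complex.norm_natCast, Complex.norm_natCast]
    have hcpos : 0 < ‖c‖ := by rw [habsc]; positivity
    have hc0 : c ≠ 0 := by
      intro h; rw [h] at hcpos; simp at hcpos
    set z' : Fin s → ℂ := fun k => v k / c with hz'def
    have hnn : ((n : ℕ) : ℝ) = (m : ℝ) + s := by rw [hn]; push_cast; ring
    have hz' : ∀ k, 1 ≤ ‖z' k‖ := by
      intro k
      have hvk := hv k
      rw [hz'def]
      simp only [norm_div, habsc]
      rw [le_div_iff₀ (div_pos hmpos hnpos), one_mul, hnn]
      exact hvk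
    set a' : ℂ := a * ((n : ℕ) : ℂ) * c ^ (m - 1 + s) with ha'
    have ha'0 : a' ≠ 0 := by
      refine mul_ne_zero (mul_ne_zero ha ?_) (pow_ne_zero _ hc0)
      exact Nat.cast_ne_zero.mpr (by omega)
    set P' : ℂ[X] := C (a * ((n : ℕ) : ℂ)) * X ^ (m - 1) * ∏ k, (X - C (v k)) with hP'
    have hq : P'.comp (C c * X) = C a' * X ^ (m - 1) * ∏ k, (X - C (z' k)) := by
      have hfac : ∀ k : Fin s, (X - C (v k)).comp (C c * X) = C c * (X - C (z' k)) := by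
        intro k
        rw [sub_comp, X_comp, C_comp, mul_sub, ← C_mul, hz'def]
        rw [mul_div_cancel₀ _ hc0]
      rw [hP', mul_comp, mul_comp, C_comp, pow_comp, X_comp, Polynomial.prod_comp]
      rw [Finset.prod_congr rfl fun k _ => hfac k, Finset.prod_mul_distrib,
        Finset.prod_const, Finset.card_univ, Fintype.card_fin, mul_pow, ha']
      simp only [C_mul, C_pow, pow_add]
      ring
    -- radius identity
    have hcast1 : ((m - 1 : ℕ) : ℝ) = (m : ℝ) - 1 := by
      push_cast [Nat.cast_sub hm1]; ring
    have hcast2 : ((m - 1 + s : ℕ) : ℝ) = (n : ℝ) - 1 := by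
      rw [hn]; push_cast [Nat.cast_sub hm1]; ring
    have hsplitR : (∏ k ∈ Finset.range (j+1), (((m : ℝ) - k) / (((m + s : ℕ) : ℝ) - k)))
        = ((m : ℝ) / n) *
          ∏ k ∈ Finset.range j, ((((m - 1 : ℕ) : ℝ) - k) / ((((m - 1) + s : ℕ) : ℝ) - k)) := by
      rw [Finset.prod_range_succ']
      have : ∀ k ∈ Finset.range j, ((m : ℝ) - (k + 1 : ℕ)) / (((m + s : ℕ) : ℝ) - (k + 1 : ℕ))
          = (((m - 1 : ℕ) : ℝ) - k) / ((((m - 1) + s : ℕ) : ℝ) - k) := by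
        intro k _
        rw [hcast1, hcast2, hnn]
        push_cast
        ring_nf
      rw [Finset.prod_congr rfl this, hnn]
      push_cast
      ring
    set u : ℂ := w / c with hu
    have hcu : c * u = w := by rw [hu, mul_div_cancel₀ _ hc0]
    have hu0 : 0 < ‖u‖ := by
      rw [hu, norm_div]
      exact div_pos hw hcpos
    have huR : ‖u‖
        < ∏ k ∈ Finset.range j, ((((m - 1 : ℕ) : ℝ) - k) / ((((m - 1) + s : ℕ) : ℝ) - k)) := by
      rw [hu, norm_div, habsc, div_lt_iff₀ (by positivity)]
      rw [hsplitR] at hwR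
      calc ‖w‖ < (m : ℝ) / n * ∏ k ∈ Finset.range j,
            ((((m - 1 : ℕ) : ℝ) - k) / ((((m - 1) + s : ℕ) : ℝ) - k)) := hwR
        _ = (∏ k ∈ Finset.range j,
            ((((m - 1 : ℕ) : ℝ) - k) / ((((m - 1) + s : ℕ) : ℝ) - k))) * ((m : ℝ) / n) := by ring
    have hres := ih (m - 1) a' ha'0 (by omega) z' hz' u hu0 huR
    rw [← hq, iter_deriv_comp] at hres
    rw [Function.iterate_succ_apply, hd]
    intro hcon
    apply hres
    rw [eval_mul, eval_C, eval_comp, eval_mul, eval_C, eval_X, hcu, hcon, mul_zero]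

theorem zargar_ahmad (m n : ℕ) (hm : 1 ≤ m) (hmn : m ≤ n)
    (z : Fin (n - m) → ℂ) (hz : ∀ k, 1 ≤ ‖z k‖)
    (j : ℕ) (hj1 : 1 ≤ j) (hjm : j ≤ m) :
    ∀ w : ℂ, 0 < ‖w‖ →
      ‖w‖ < ∏ k ∈ Finset.range j, (((m : ℝ) - k) / ((n : ℝ) - k)) →
      ((Polynomial.derivative)^[j]
        (Polynomial.X ^ m * ∏ k, (Polynomial.X - Polynomial.C (z k)))).eval w ≠ 0 := by
  intro w hw hwR
  have hns : m + (n - m) = n := Nat.add_sub_cancel' hmn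
  have h1 : (Polynomial.X ^ m * ∏ k, (Polynomial.X - Polynomial.C (z k)) : ℂ[X])
      = C 1 * X ^ m * ∏ k, (X - C (z k)) := by rw [map_one, one_mul]
  rw [h1]
  apply key j m (1 : ℂ) one_ne_zero hjm z hz w hw
  rw [hns]
  exact hwR
end

section
/- Let m ≥ 0 be an integer, g : ℂ → ℂ an entire function, (a_n)_{n≥1} a sequence of nonzero complex numbers with |a_n| → +∞, and (p_n)_{n≥1} a sequence of nonnegative integers such that for every a > 0 the series ∑_{n=1}^∞ (a/|a_n|)^{1+p_n} converges. Define f(z) = z^m·e^{g(z)}·∏_{n=1}^∞ E_{p_n}(z/a_n). Then f is entire, and for every z ∈ ℂ with f(z) ≠ 0 one has f'(z)/f(z) = m/z + g'(z) + ∑_{n=1}^∞ ( 1/(z − a_n) + ∑_{k=1}^{p_n} z^{k−1}/a_n^k ) (where the term m/z is interpreted as 0 if m = 0; note f(z) ≠ 0 forces z ≠ 0 when m ≥ 1). -/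
/-- The Weierstrass elementary factor `E_k(w)`:
`E_0(w) = 1 - w` and `E_k(w) = (1 - w) * exp (∑_{j=1}^k w^j / j)` for `k ≥ 1`. -/
noncomputable def weierstrassE (k : ℕ) (w : ℂ) : ℂ :=
  (1 - w) * Complex.exp (∑ j ∈ Finset.range k, w ^ (j + 1) / (j + 1))

open Complex Finset

/-- log of the Weierstrass factor. -/
noncomputable def wLog (k : ℕ) (c z : ℂ) : ℂ :=
  Complex.log (1 - z / c) + ∑ j ∈ Finset.range k, (z / c) ^ (j + 1) / (j + 1)

/-- logarithmic derivative term. -/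
noncomputable def wTerm (k : ℕ) (c z : ℂ) : ℂ :=
  1 / (z - c) + ∑ j ∈ Finset.range k, z ^ j / c ^ (j + 1)

lemma exp_wLog (k : ℕ) {c z : ℂ} (h : z / c ≠ 1) :
    Complex.exp (wLog k c z) = weierstrassE k (z / c) := by
  have h1 : 1 - z / c ≠ 0 := sub_ne_zero.mpr (Ne.symm h)
  rw [wLog, Complex.exp_add, Complex.exp_log h1, weierstrassE]

lemma norm_wLog_le (k : ℕ) {c z : ℂ} (h : ‖z / c‖ ≤ 1 / 2) :
    ‖wLog k c z‖ ≤ 2 * ‖z / c‖ ^ (k + 1) := by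
  set w := z / c with hw
  have hw1 : ‖w‖ < 1 := lt_of_le_of_lt h (by norm_num)
  have key := Complex.norm_log_sub_logTaylor_le k (z := -w) (by rwa [norm_neg])
  have hTay : Complex.logTaylor (k + 1) (-w) = -∑ j ∈ Finset.range k, w ^ (j + 1) / (j + 1) := by
    rw [Complex.logTaylor]
    rw [Finset.sum_range_succ']
    simp only [pow_zero, Nat.cast_zero, div_zero, mul_zero, zero_div, add_zero, mul_one]
    rw [← Finset.sum_neg_distrib]
    refine Finset.sum_congr rfl fun j _ => ?_
    have : (-1 : ℂ) ^ (j + 1 + 1) * (-w) ^ (j + 1) = -(w ^ (j + 1)) := by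
      rw [neg_pow w, ← mul_assoc, ← pow_add]
      have : (-1 : ℂ) ^ (j + 1 + 1 + (j + 1)) = -1 := by
        rw [show j + 1 + 1 + (j + 1) = 2 * (j + 1) + 1 by ring, pow_succ, pow_mul]
        norm_num
      rw [this]; ring
    rw [this]
    push_cast
    ring
  have heq : wLog k c z = Complex.log (1 + -w) - Complex.logTaylor (k + 1) (-w) := by
    rw [wLog, hTay, sub_neg_eq_add, ← sub_eq_add_neg]
  rw [heq]
  refine key.trans ?_
  rw [norm_neg]
  have h2 : (1 - ‖w‖)⁻¹ ≤ 2 := by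
    have h3 : (1 : ℝ) / 2 ≤ 1 - ‖w‖ := by linarith
    calc (1 - ‖w‖)⁻¹ ≤ ((1 : ℝ) / 2)⁻¹ := inv_anti₀ (by norm_num) h3
      _ = 2 := by norm_num
  have hk1 : (1 : ℝ) ≤ (k : ℝ) + 1 := by
    have := Nat.cast_nonneg (α := ℝ) k
    linarith
  have hnum : ‖w‖ ^ (k + 1) * (1 - ‖w‖)⁻¹ ≤ ‖w‖ ^ (k + 1) * 2 :=
    mul_le_mul_of_nonneg_left h2 (by positivity)
  calc ‖w‖ ^ (k + 1) * (1 - ‖w‖)⁻¹ / (k + 1)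
      ≤ ‖w‖ ^ (k + 1) * 2 / 1 :=
        div_le_div₀ (by positivity) hnum one_pos hk1
    _ = 2 * ‖w‖ ^ (k + 1) := by rw [div_one]; ring

lemma hasDerivAt_wSum (k : ℕ) (c : ℂ) (z : ℂ) :
    HasDerivAt (fun z => ∑ j ∈ Finset.range k, (z / c) ^ (j + 1) / (j + 1))
      (∑ j ∈ Finset.range k, z ^ j / c ^ (j + 1)) z := by
  apply HasDerivAt.fun_sum
  intro j _
  have hj : ((j : ℂ) + 1) ≠ 0 := Nat.cast_add_one_ne_zero j
  have h1 : HasDerivAt (fun z : ℂ => (z / c) ^ (j + 1))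
      ((((j : ℕ) + 1 : ℕ) : ℂ) * (z / c) ^ j * (1 / c)) z := by
    simpa using ((hasDerivAt_id z).div_const c).fun_pow (j + 1)
  have h2 := h1.div_const ((j : ℂ) + 1)
  convert h2 using 1
  · rfl
  push_cast
  rcases eq_or_ne c 0 with rfl | hc
  · simp
  · rw [div_pow]
    field_simp
    ring

lemma slit_of_small {w : ℂ} (h : ‖w‖ < 1) : 1 - w ∈ Complex.slitPlane := by
  rw [sub_eq_add_neg]
  exact Complex.mem_slitPlane_of_norm_lt_one (by rwa [norm_neg])

lemma hasDerivAt_one_sub_div {c : ℂ} (z : ℂ) :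
    HasDerivAt (fun z : ℂ => 1 - z / c) (-(1 / c)) z := by
  simpa using ((hasDerivAt_id z).div_const c).const_sub 1

lemma hasDerivAt_wLog (k : ℕ) {c z : ℂ} (hc : c ≠ 0) (h : ‖z / c‖ < 1) :
    HasDerivAt (wLog k c) (wTerm k c z) z := by
  have hzc : z ≠ c := by
    intro hzc
    rw [hzc, div_self hc] at h
    norm_num at h
  have h1 : 1 - z / c ≠ 0 :=
    sub_ne_zero.mpr fun h1 => hzc ((div_eq_one_iff_eq hc).mp h1.symm)
  have hlog : HasDerivAt (fun z => Complex.log (1 - z / c)) (1 / (z - c)) z := by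
    have := (hasDerivAt_one_sub_div (c := c) z).clog (slit_of_small h)
    convert this using 1
    rw [div_eq_div_iff (sub_ne_zero.mpr hzc) h1]
    field_simp
    ring
  have := hlog.add (hasDerivAt_wSum k c z)
  exact this

lemma wE_differentiable (k : ℕ) (c : ℂ) :
    Differentiable ℂ (fun z => weierstrassE k (z / c)) := by
  simp only [weierstrassE]
  apply Differentiable.mul
  · exact (differentiable_const 1).sub ((differentiable_id).div_const c)
  · apply Differentiable.cexp
    apply Differentiable.fun_sum
    intro j _
    exact (((differentiable_id).div_const c).pow (j + 1)).div_const _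

lemma wE_ne_zero {k : ℕ} {w : ℂ} : weierstrassE k w ≠ 0 ↔ w ≠ 1 := by
  rw [weierstrassE, mul_ne_zero_iff]
  constructor
  · rintro ⟨h1, -⟩ hw
    exact h1 (by rw [hw, sub_self])
  · intro hw
    exact ⟨sub_ne_zero.mpr (Ne.symm hw), Complex.exp_ne_zero _⟩

lemma logDeriv_wE (k : ℕ) {c z : ℂ} (hc : c ≠ 0) (hz : z ≠ c) :
    logDeriv (fun z => weierstrassE k (z / c)) z = wTerm k c z := by
  have h1 : 1 - z / c ≠ 0 :=
    sub_ne_zero.mpr fun h1 => hz ((div_eq_one_iff_eq hc).mp h1.symm)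
  have hq := hasDerivAt_wSum k c z
  have hE : HasDerivAt (fun z => weierstrassE k (z / c))
      ((-(1 / c)) * Complex.exp (∑ j ∈ Finset.range k, (z / c) ^ (j + 1) / (j + 1)) +
        (1 - z / c) * (Complex.exp (∑ j ∈ Finset.range k, (z / c) ^ (j + 1) / (j + 1)) *
          (∑ j ∈ Finset.range k, z ^ j / c ^ (j + 1)))) z := by
    simp only [weierstrassE]
    exact (hasDerivAt_one_sub_div z).mul hq.cexp
  have hE0 := Complex.exp_ne_zero (∑ j ∈ Finset.range k, (z / c) ^ (j + 1) / (j + 1 : ℂ))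
  rw [logDeriv_apply, hE.deriv, wTerm, weierstrassE]
  rw [add_div]
  congr 1
  · rw [mul_div_mul_right _ _ hE0, div_eq_div_iff h1 (sub_ne_zero.mpr hz)]
    field_simp
    ring
  · rw [mul_div_mul_left _ _ h1, mul_comm, mul_div_assoc, div_self hE0, mul_one]

set_option maxHeartbeats 2000000 in
theorem weierstrass_product_log_deriv (m : ℕ) (g : ℂ → ℂ) (hg : Differentiable ℂ g)
    (a : ℕ → ℂ) (ha : ∀ n, a n ≠ 0)
    (ha' : Filter.Tendsto (fun n => ‖a n‖) Filter.atTop Filter.atTop)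
    (p : ℕ → ℕ)
    (hsum : ∀ c : ℝ, 0 < c → Summable (fun n => (c / ‖a n‖) ^ (1 + p n)))
    (f : ℂ → ℂ)
    (hf : ∀ z, f z = z ^ m * Complex.exp (g z) * ∏' n, weierstrassE (p n) (z / a n)) :
    Differentiable ℂ f ∧
      ∀ z, f z ≠ 0 →
        deriv f z / f z = (m : ℂ) / z + deriv g z +
          ∑' n, (1 / (z - a n) + ∑ k ∈ Finset.range (p n), z ^ k / (a n) ^ (k + 1)) := by
  have main : ∀ z₀ : ℂ, DifferentiableAt ℂ f z₀ ∧
      (f z₀ ≠ 0 → deriv f z₀ / f z₀ = (m : ℂ) / z₀ + deriv g z₀ +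
        ∑' n, (1 / (z₀ - a n) + ∑ k ∈ Finset.range (p n), z₀ ^ k / (a n) ^ (k + 1))) := by
    intro z₀
    set R : ℝ := ‖z₀‖ + 1 with hRdef
    have hR0 : 0 < R := by positivity
    have hz₀U : z₀ ∈ Metric.ball (0 : ℂ) R := by
      rw [mem_ball_zero_iff]
      exact lt_add_one ‖z₀‖
    obtain ⟨N, hN⟩ := Filter.eventually_atTop.mp (ha'.eventually_ge_atTop (2 * R))
    have hmem : ∀ n : ↥((↑(Finset.range N) : Set ℕ)ᶜ), N ≤ (n : ℕ) := by
      rintro ⟨n, hn⟩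
      simpa [Finset.mem_coe, Finset.mem_range, not_lt] using hn
    have hbig : ∀ n : ↥((↑(Finset.range N) : Set ℕ)ᶜ), 2 * R ≤ ‖a n‖ :=
      fun n => hN n (hmem n)
    have hapos : ∀ n : ℕ, 0 < ‖a n‖ := fun n => norm_pos_iff.mpr (ha n)
    have hsmall : ∀ (n : ↥((↑(Finset.range N) : Set ℕ)ᶜ)) (z : ℂ), z ∈ Metric.ball (0 : ℂ) R →
        ‖z / a n‖ ≤ R / ‖a n‖ ∧ ‖z / a n‖ ≤ 1 / 2 := by
      intro n z hz
      rw [mem_ball_zero_iff] at hz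
      have hA := hapos (n : ℕ)
      have h2 : ‖z / a (n : ℕ)‖ ≤ R / ‖a n‖ := by
        rw [norm_div]
        exact (div_le_div_iff_of_pos_right hA).mpr hz.le
      refine ⟨h2, h2.trans ?_⟩
      rw [div_le_div_iff₀ hA (by norm_num : (0:ℝ) < 2)]
      linarith [hbig n]
    -- the tail log-sum
    set H : ℂ → ℂ :=
      fun z => ∑' n : ↥((↑(Finset.range N) : Set ℕ)ᶜ), wLog (p n) (a n) z with hHdef
    have hu : Summable (fun n : ↥((↑(Finset.range N) : Set ℕ)ᶜ) =>
        2 * (R / ‖a n‖) ^ (1 + p n)) := by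
      have := ((hsum R hR0).mul_left 2).subtype ((↑(Finset.range N) : Set ℕ)ᶜ)
      exact this
    have hbound : ∀ (n : ↥((↑(Finset.range N) : Set ℕ)ᶜ)) (z : ℂ), z ∈ Metric.ball (0 : ℂ) R →
        ‖wLog (p n) (a n) z‖ ≤ 2 * (R / ‖a n‖) ^ (1 + p n) := by
      intro n z hz
      obtain ⟨hRa, h12⟩ := hsmall n z hz
      refine (norm_wLog_le (p n) h12).trans ?_
      rw [add_comm 1 (p (n : ℕ))]
      gcongr

    have hdiffw : ∀ n : ↥((↑(Finset.range N) : Set ℕ)ᶜ),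
        DifferentiableOn ℂ (wLog (p n) (a n)) (Metric.ball (0 : ℂ) R) := by
      intro n z hz
      exact ((hasDerivAt_wLog (p n) (ha n)
        (lt_of_le_of_lt (hsmall n z hz).2 (by norm_num))).differentiableAt).differentiableWithinAt
    have HdiffOn : DifferentiableOn ℂ H (Metric.ball (0 : ℂ) R) :=
      differentiableOn_tsum_of_summable_norm hu hdiffw Metric.isOpen_ball hbound
    have hHadd : ∀ z ∈ Metric.ball (0 : ℂ) R,
        HasSum (fun n : ↥((↑(Finset.range N) : Set ℕ)ᶜ) => wTerm (p n) (a n) z) (deriv H z) := by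
      intro z hz
      have h0 := hasSum_deriv_of_summable_norm hu hdiffw Metric.isOpen_ball hbound hz
      have he : (fun n : ↥((↑(Finset.range N) : Set ℕ)ᶜ) => deriv (wLog (p n) (a n)) z) =
          fun n : ↥((↑(Finset.range N) : Set ℕ)ᶜ) => wTerm (p n) (a n) z :=
        funext fun n => (hasDerivAt_wLog (p n) (ha n)
          (lt_of_le_of_lt (hsmall n z hz).2 (by norm_num))).deriv
      rwa [he] at h0
    have hlogsummable : ∀ z ∈ Metric.ball (0 : ℂ) R,
        Summable (fun n : ↥((↑(Finset.range N) : Set ℕ)ᶜ) => wLog (p n) (a n) z) :=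
      fun z hz => Summable.of_norm_bounded hu (fun n => hbound n z hz)
    have hprod : ∀ z ∈ Metric.ball (0 : ℂ) R,
        HasProd (fun n : ↥((↑(Finset.range N) : Set ℕ)ᶜ) => weierstrassE (p n) (z / a n))
          (Complex.exp (H z)) := by
      intro z hz
      have h1 := ((hlogsummable z hz).hasSum).cexp
      have he : (Complex.exp ∘ fun n : ↥((↑(Finset.range N) : Set ℕ)ᶜ) => wLog (p n) (a n) z) =
          fun n : ↥((↑(Finset.range N) : Set ℕ)ᶜ) => weierstrassE (p n) (z / a n) := by
        funext n
        refine exp_wLog _ ?_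
        intro hone
        have := (hsmall n z hz).2
        rw [hone] at this
        norm_num at this
      rwa [he] at h1
    have htprod : ∀ z ∈ Metric.ball (0 : ℂ) R,
        (∏' n, weierstrassE (p n) (z / a n)) =
          (∏ n ∈ Finset.range N, weierstrassE (p n) (z / a n)) * Complex.exp (H z) := by
      intro z hz
      have h2 := Multipliable.tprod_mul_tprod_compl (f := fun n => weierstrassE (p n) (z / a n))
        (s := (↑(Finset.range N) : Set ℕ)) ⟨_, hasProd_fintype _⟩ (hprod z hz).multipliable
      rw [← h2]
      congr 1
      · exact Finset.tprod_subtype' (Finset.range N) (fun n => weierstrassE (p n) (z / a n))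
      · exact (hprod z hz).tprod_eq
    have hfF : Set.EqOn f (fun z => z ^ m * Complex.exp (g z) *
        ((∏ n ∈ Finset.range N, weierstrassE (p n) (z / a n)) * Complex.exp (H z)))
        (Metric.ball (0 : ℂ) R) := by
      intro z hz
      rw [hf z, htprod z hz]
    have hfeq : f =ᶠ[nhds z₀] (fun z => z ^ m * Complex.exp (g z) *
        ((∏ n ∈ Finset.range N, weierstrassE (p n) (z / a n)) * Complex.exp (H z))) :=
      Filter.eventuallyEq_of_mem (Metric.isOpen_ball.mem_nhds hz₀U) hfF
    have hHdiffAt : DifferentiableAt ℂ H z₀ :=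
      HdiffOn.differentiableAt (Metric.isOpen_ball.mem_nhds hz₀U)
    have hPdiffAt : ∀ n : ℕ, DifferentiableAt ℂ (fun z => weierstrassE (p n) (z / a n)) z₀ :=
      fun n => (wE_differentiable (p n) (a n)).differentiableAt
    have hFdiffAt : DifferentiableAt ℂ (fun z => z ^ m * Complex.exp (g z) *
        ((∏ n ∈ Finset.range N, weierstrassE (p n) (z / a n)) * Complex.exp (H z))) z₀ := by
      refine DifferentiableAt.mul (DifferentiableAt.mul (differentiableAt_pow m)
        ((hg z₀).cexp) ) (DifferentiableAt.mul ?_ (hHdiffAt.cexp))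
      exact DifferentiableAt.fun_finsetProd (fun n _ => hPdiffAt n)
    have hfdiffAt : DifferentiableAt ℂ f z₀ := (hfeq.differentiableAt_iff).mpr hFdiffAt
    refine ⟨hfdiffAt, ?_⟩
    intro hfz
    have hF0 : (fun z => z ^ m * Complex.exp (g z) *
        ((∏ n ∈ Finset.range N, weierstrassE (p n) (z / a n)) * Complex.exp (H z))) z₀ ≠ 0 := by
      rw [← hfF hz₀U]
      exact hfz
    simp only [ne_eq, mul_eq_zero, not_or] at hF0
    obtain ⟨⟨hzm, -⟩, hprodne, -⟩ := hF0
    have hPn : ∀ n ∈ Finset.range N, weierstrassE (p n) (z₀ / a n) ≠ 0 :=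
      Finset.prod_ne_zero_iff.mp hprodne
    have hza : ∀ n ∈ Finset.range N, z₀ ≠ a n := by
      intro n hn hcontra
      exact (wE_ne_zero.mp (hPn n hn)) (by rw [hcontra, div_self (ha n)])
    -- logDeriv computations
    have hld_head : logDeriv (fun z : ℂ => z ^ m * Complex.exp (g z)) z₀ =
        (m : ℂ) / z₀ + deriv g z₀ := by
      rw [logDeriv_mul (f := fun z : ℂ => z ^ m) (g := fun z => Complex.exp (g z)) z₀ hzm
        (Complex.exp_ne_zero _) (differentiableAt_pow m) ((hg z₀).cexp)]
      congr 1
      · exact logDeriv_pow z₀ m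
      · have hd : HasDerivAt (fun z => Complex.exp (g z))
            (Complex.exp (g z₀) * deriv g z₀) z₀ := ((hg z₀).hasDerivAt).cexp
        rw [logDeriv_apply, hd.deriv, mul_div_cancel_left₀ _ (Complex.exp_ne_zero _)]
    have hld_prod : logDeriv (fun z : ℂ =>
        ∏ n ∈ Finset.range N, weierstrassE (p n) (z / a n)) z₀ =
        ∑ n ∈ Finset.range N, wTerm (p n) (a n) z₀ := by
      rw [logDeriv_prod (s := Finset.range N) (f := fun n z => weierstrassE (p n) (z / a n)) (x := z₀) hPn
        (fun n _ => hPdiffAt n)]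
      exact Finset.sum_congr rfl fun n hn => logDeriv_wE (p n) (ha n) (hza n hn)
    have hld_expH : logDeriv (fun z : ℂ => Complex.exp (H z)) z₀ =
        ∑' n : ↥((↑(Finset.range N) : Set ℕ)ᶜ), wTerm (p n) (a n) z₀ := by
      have hd : HasDerivAt (fun z => Complex.exp (H z))
          (Complex.exp (H z₀) * deriv H z₀) z₀ := (hHdiffAt.hasDerivAt).cexp
      rw [logDeriv_apply, hd.deriv, mul_div_cancel_left₀ _ (Complex.exp_ne_zero _)]
      exact ((hHadd z₀ hz₀U).tsum_eq).symm
    have hsummT : Summable (fun n : ℕ =>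
        1 / (z₀ - a n) + ∑ k ∈ Finset.range (p n), z₀ ^ k / (a n) ^ (k + 1)) := by
      have h1 : Summable (fun n : ↥((↑(Finset.range N) : Set ℕ)ᶜ) => wTerm (p n) (a n) z₀) :=
        (hHadd z₀ hz₀U).summable
      exact (Finset.summable_compl_iff (Finset.range N)).mp h1
    have hsplit : (∑ n ∈ Finset.range N, wTerm (p n) (a n) z₀) +
        (∑' n : ↥((↑(Finset.range N) : Set ℕ)ᶜ), wTerm (p n) (a n) z₀) =
        ∑' n : ℕ, (1 / (z₀ - a n) + ∑ k ∈ Finset.range (p n), z₀ ^ k / (a n) ^ (k + 1)) :=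
      hsummT.sum_add_tsum_compl
    have hldF : logDeriv (fun z => z ^ m * Complex.exp (g z) *
        ((∏ n ∈ Finset.range N, weierstrassE (p n) (z / a n)) * Complex.exp (H z))) z₀ =
        (m : ℂ) / z₀ + deriv g z₀ +
          ∑' n : ℕ, (1 / (z₀ - a n) + ∑ k ∈ Finset.range (p n), z₀ ^ k / (a n) ^ (k + 1)) := by
      rw [logDeriv_mul (f := fun z : ℂ => z ^ m * Complex.exp (g z))
          (g := fun z => (∏ n ∈ Finset.range N, weierstrassE (p n) (z / a n)) *
            Complex.exp (H z)) z₀ (mul_ne_zero hzm (Complex.exp_ne_zero _))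
          (mul_ne_zero hprodne (Complex.exp_ne_zero _))
          ((differentiableAt_pow m).mul ((hg z₀).cexp))
          ((DifferentiableAt.fun_finsetProd (fun n _ => hPdiffAt n)).mul (hHdiffAt.cexp)),
        logDeriv_mul (f := fun z : ℂ => ∏ n ∈ Finset.range N, weierstrassE (p n) (z / a n))
          (g := fun z => Complex.exp (H z)) z₀ hprodne (Complex.exp_ne_zero _)
          (DifferentiableAt.fun_finsetProd (fun n _ => hPdiffAt n)) (hHdiffAt.cexp),
        hld_head, hld_prod, hld_expH, add_assoc, hsplit]
      ring
    have hderiv_eq : deriv f z₀ = deriv (fun z => z ^ m * Complex.exp (g z) *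
        ((∏ n ∈ Finset.range N, weierstrassE (p n) (z / a n)) * Complex.exp (H z))) z₀ :=
      hfeq.deriv_eq
    rw [show deriv f z₀ / f z₀ = logDeriv (fun z => z ^ m * Complex.exp (g z) *
        ((∏ n ∈ Finset.range N, weierstrassE (p n) (z / a n)) * Complex.exp (H z))) z₀ from by
      rw [logDeriv_apply, ← hderiv_eq, hfF hz₀U]]
    exact hldF
  exact ⟨fun z₀ => (main z₀).1, fun z₀ hz₀ => (main z₀).2 hz₀⟩
end

section
/- Let t > 0, let h : ℕ → ℝ⁺ satisfy h(n) > t for all n and ∑_{n=1}^∞ 1/h(n) < +∞, let (a_n) be complex numbers with |a_n| ≥ h(n) for all n, and let (p_n) be a sequence of nonnegative integers. Then the series ∑_{n=1}^∞ (1 − (t/h(n))^{p_n})/(h(n) − t) converges, and for every z ∈ ℂ with |z| < t the double series ∑_{n=1}^∞ ∑_{k=1}^{p_n} z^{k−1}/a_n^k converges absolutely with |∑_{n=1}^∞ ∑_{k=1}^{p_n} z^{k−1}/a_n^k| ≤ ∑_{n=1}^∞ (1 − (t/h(n))^{p_n})/(h(n) − t). -/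
theorem double_series_bound (t : ℝ) (ht : 0 < t)
    (h : ℕ → ℝ) (hh : ∀ n, t < h n) (hhsum : Summable (fun n => 1 / h n))
    (a : ℕ → ℂ) (hah : ∀ n, h n ≤ ‖a n‖) (p : ℕ → ℕ) :
    Summable (fun n => (1 - (t / h n) ^ (p n)) / (h n - t)) ∧
    ∀ z : ℂ, ‖z‖ < t →
      Summable (fun n => ∑ k ∈ Finset.range (p n), ‖z ^ k / (a n) ^ (k + 1)‖) ∧
      ‖∑' n, ∑ k ∈ Finset.range (p n), z ^ k / (a n) ^ (k + 1)‖ ≤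
        ∑' n, (1 - (t / h n) ^ (p n)) / (h n - t) := by
  have hhpos : ∀ n, 0 < h n := fun n => ht.trans (hh n)
  have hht : ∀ n, 0 < h n - t := fun n => sub_pos.mpr (hh n)
  have hr1 : ∀ n, t / h n < 1 := fun n => (div_lt_one (hhpos n)).mpr (hh n)
  have hr0 : ∀ n, 0 ≤ t / h n := fun n => div_nonneg ht.le (hhpos n).le
  set f : ℕ → ℝ := fun n => (1 - (t / h n) ^ (p n)) / (h n - t) with hf
  have hfnonneg : ∀ n, 0 ≤ f n := fun n =>
    div_nonneg (by
      have : (t / h n) ^ (p n) ≤ 1 := pow_le_one₀ (hr0 n) (hr1 n).le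
      linarith) (hht n).le
  -- summability of f
  have htend : Filter.Tendsto (fun n => 1 / h n) Filter.atTop (nhds 0) :=
    hhsum.tendsto_atTop_zero
  have hev : ∀ᶠ n in Filter.atTop, 1 / h n < 1 / (2 * t) :=
    htend.eventually_lt_const (by positivity)
  obtain ⟨N, hN⟩ := Filter.eventually_atTop.mp hev
  have hbsum : Summable (fun n => 2 * (1 / h (n + N))) :=
    ((summable_nat_add_iff N).mpr hhsum).mul_left 2
  have hfsum : Summable f := by
    apply (summable_nat_add_iff N).mp
    refine Summable.of_nonneg_of_le (fun n => hfnonneg _) ?_ hbsum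
    intro n
    have h2t : 2 * t < h (n + N) := by
      have h1 := hN (n + N) (Nat.le_add_left N n)
      rw [div_lt_div_iff₀ (hhpos (n + N)) (by positivity : (0:ℝ) < 2 * t)] at h1
      linarith
    have hle1 : f (n + N) ≤ 1 / (h (n + N) - t) := by
      have hnum := pow_nonneg (hr0 (n + N)) (p (n + N))
      exact div_le_div₀ zero_le_one (by linarith) (hht _) le_rfl
    refine hle1.trans ?_
    rw [mul_one_div, div_le_div_iff₀ (hht _) (hhpos _)]
    linarith
  refine ⟨hfsum, fun z hz => ?_⟩
  have key : ∀ n,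
      ∑ k ∈ Finset.range (p n), ‖z ^ k / (a n) ^ (k + 1)‖ ≤ f n := by
    intro n
    have habs : 0 < ‖a n‖ := lt_of_lt_of_le (hhpos n) (hah n)
    calc ∑ k ∈ Finset.range (p n), ‖z ^ k / (a n) ^ (k + 1)‖
        ≤ ∑ k ∈ Finset.range (p n), (1 / h n) * (t / h n) ^ k := by
          apply Finset.sum_le_sum
          intro k _
          rw [norm_div, norm_pow, norm_pow]
          have heq : (1 / h n) * (t / h n) ^ k = t ^ k / (h n) ^ (k + 1) := by
            rw [div_pow]
            field_simp
            ring
          rw [heq]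
          exact div_le_div₀ (pow_nonneg ht.le k)
            (pow_le_pow_left₀ (norm_nonneg z) hz.le k)
            (pow_pos (hhpos n) (k + 1))
            (pow_le_pow_left₀ (hhpos n).le (hah n) (k + 1))
      _ = f n := by
          rw [← Finset.mul_sum, geom_sum_eq (hr1 n).ne, hf]
          have h1 : h n ≠ 0 := (hhpos n).ne'
          have h2 : h n - t ≠ 0 := (hht n).ne'
          have h3 : t / h n - 1 ≠ 0 := sub_ne_zero.mpr (hr1 n).ne
          have h5 : h n * (t / h n - 1) = t - h n := by field_simp
          rw [div_mul_div_comm, one_mul,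
            div_eq_div_iff (mul_ne_zero h1 h3) h2, h5]
          ring
  have hSsum : Summable (fun n => ∑ k ∈ Finset.range (p n),
      ‖z ^ k / (a n) ^ (k + 1)‖) :=
    Summable.of_nonneg_of_le
      (fun n => Finset.sum_nonneg fun k _ => norm_nonneg _)
      key hfsum
  refine ⟨hSsum, ?_⟩
  have hT : ∀ n, ‖∑ k ∈ Finset.range (p n), z ^ k / (a n) ^ (k + 1)‖ ≤
      ∑ k ∈ Finset.range (p n), ‖z ^ k / (a n) ^ (k + 1)‖ := by
    intro n
    simpa using norm_sum_le (Finset.range (p n)) (fun k => z ^ k / (a n) ^ (k + 1))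
  have hTsum : Summable (fun n =>
      ‖∑ k ∈ Finset.range (p n), z ^ k / (a n) ^ (k + 1)‖) :=
    Summable.of_nonneg_of_le (fun n => norm_nonneg _)
      (fun n => (hT n).trans (key n)) hfsum
  calc ‖∑' n, ∑ k ∈ Finset.range (p n), z ^ k / (a n) ^ (k + 1)‖
      ≤ ∑' n, ‖∑ k ∈ Finset.range (p n), z ^ k / (a n) ^ (k + 1)‖ :=
        norm_tsum_le_tsum_norm hTsum
    _ ≤ ∑' n, f n := Summable.tsum_le_tsum (fun n => (hT n).trans (key n)) hTsum hfsum
end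

section
/- Let f : ℂ → ℂ be an entire function admitting a Weierstrass factorisation f(z) = z^m·e^{g(z)}·∏_{n=1}^∞ E_{p_n}(z/a_n) (with the product converging locally uniformly on ℂ), where: (i) m ≥ 1 is a positive integer and g is entire; (ii) the nonzero roots a_n satisfy |a_n| ≥ h(n) > t for all n, for some constant t > 0 and some function h : ℕ → ℝ⁺; (iii) the sequence of nonnegative integers (p_n) does not converge to 0, and ∑_{n=1}^∞ 1/h(n) < +∞; (iv) for all z with 0 < |z| < t, |g'(z)| + ∑_{n=1}^∞ 1/(h(n) − t) + ∑_{n=1}^∞ (1 − (t/h(n))^{p_n})/(h(n) − t) < m/t. Then f' has no zero in B(0,t) \ {0}; that is, f'(z) ≠ 0 for all z with 0 < |z| < t. -/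
lemma hasDerivAt_weierstrassE (k : ℕ) (w : ℂ) :
    HasDerivAt (weierstrassE k)
      (-w ^ k * Complex.exp (∑ j ∈ Finset.range k, w ^ (j + 1) / (j + 1))) w := by
  have hQ : HasDerivAt (fun x : ℂ => ∑ j ∈ Finset.range k, x ^ (j + 1) / (j + 1))
      (∑ j ∈ Finset.range k, w ^ j) w := by
    refine HasDerivAt.fun_sum (𝕜 := ℂ) (F := ℂ) (fun j _ => ?_)
    have h1 : HasDerivAt (fun x : ℂ => x ^ (j + 1) / (j + 1))
        (((j : ℂ) + 1) * w ^ j / ((j : ℂ) + 1)) w := by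
      have := (hasDerivAt_pow (j + 1) w).div_const ((j : ℂ) + 1)
      simpa using this
    have hne : ((j : ℂ) + 1) ≠ 0 := by
      exact_mod_cast (Nat.cast_ne_zero (R := ℂ)).mpr (Nat.succ_ne_zero j)
    rw [mul_div_cancel_left₀ _ hne] at h1
    exact h1
  have h1 : HasDerivAt (fun x : ℂ => 1 - x) (-1) w := by
    simpa using (hasDerivAt_id w).const_sub 1
  have h2 := h1.mul hQ.cexp
  have hgeom := geom_sum_mul w k
  refine HasDerivAt.congr_deriv h2 (Eq.symm ?_)
  set E := Complex.exp (∑ j ∈ Finset.range k, w ^ (j + 1) / (j + 1))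
  linear_combination E * hgeom

lemma weierstrassE_ne_zero {k : ℕ} {w : ℂ} (hw : w ≠ 1) : weierstrassE k w ≠ 0 :=
  mul_ne_zero (sub_ne_zero.mpr (Ne.symm hw)) (Complex.exp_ne_zero _)

lemma logDeriv_weierstrassE (k : ℕ) {w : ℂ} (hw : w ≠ 1) :
    logDeriv (weierstrassE k) w = -w ^ k / (1 - w) := by
  have h1 : (1 : ℂ) - w ≠ 0 := sub_ne_zero.mpr (Ne.symm hw)
  rw [logDeriv_apply, (hasDerivAt_weierstrassE k w).deriv]
  unfold weierstrassE
  rw [mul_comm (1 - w) _, mul_comm (-w ^ k) _, mul_div_mul_left _ _ (Complex.exp_ne_zero _)]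

lemma abs_weierstrassE_ge (k : ℕ) {w : ℂ} (hw : ‖w‖ < 1) :
    (1 - ‖w‖) ^ 2 ≤ ‖weierstrassE k w‖ := by
  have h0 : (0 : ℝ) ≤ ‖w‖ := norm_nonneg w
  have h1 : (0 : ℝ) < 1 - ‖w‖ := by linarith
  have habs1 : 1 - ‖w‖ ≤ ‖1 - w‖ := by
    have := norm_sub_norm_le 1 w
    simpa using this
  have hQ : ‖∑ j ∈ Finset.range k, w ^ (j + 1) / (j + 1)‖
      ≤ -Real.log (1 - ‖w‖) := by
    calc ‖∑ j ∈ Finset.range k, w ^ (j + 1) / (j + 1)‖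
        ≤ ∑ j ∈ Finset.range k, ‖w ^ (j + 1) / (j + 1)‖ :=
          norm_sum_le _ _
      _ = ∑ j ∈ Finset.range k, (‖w‖) ^ (j + 1) / (j + 1) := by
          refine Finset.sum_congr rfl fun j _ => ?_
          rw [norm_div, norm_pow,
            show ((j : ℂ) + 1) = ((j + 1 : ℕ) : ℂ) by push_cast; ring, Complex.norm_natCast]
          push_cast
          ring
      _ ≤ -Real.log (1 - ‖w‖) := by
          refine Summable.sum_le_tsum (L := SummationFilter.unconditional ℕ) (Finset.range k) (fun j _ => by positivity) ?_ |>.trans_eq ?_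
          · exact (Real.hasSum_pow_div_log_of_abs_lt_one (by rwa [abs_of_nonneg h0])).summable
          · exact (Real.hasSum_pow_div_log_of_abs_lt_one (by rwa [abs_of_nonneg h0])).tsum_eq
  have hre : -‖∑ j ∈ Finset.range k, w ^ (j + 1) / (j + 1)‖
      ≤ (∑ j ∈ Finset.range k, w ^ (j + 1) / (j + 1)).re := by
    have := Complex.abs_re_le_norm (∑ j ∈ Finset.range k, w ^ (j + 1) / (j + 1))
    have := neg_abs_le ((∑ j ∈ Finset.range k, w ^ (j + 1) / (j + 1)).re)
    linarith
  have hexp : 1 - ‖w‖ ≤ ‖Complex.exp (∑ j ∈ Finset.range k, w ^ (j + 1) / (j + 1))‖ := by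
    rw [Complex.norm_exp]
    calc 1 - ‖w‖ = Real.exp (Real.log (1 - ‖w‖)) := (Real.exp_log h1).symm
      _ ≤ Real.exp ((∑ j ∈ Finset.range k, w ^ (j + 1) / (j + 1)).re) := by
          apply Real.exp_le_exp.mpr; linarith
  unfold weierstrassE
  rw [norm_mul, sq]
  exact mul_le_mul habs1 hexp h1.le (norm_nonneg _)

lemma my_div_le_div_left {a b c : ℝ} (ha : 0 ≤ a) (hc : 0 < c) (hcb : c ≤ b) :
    a / b ≤ a / c := by
  have hb : 0 < b := lt_of_lt_of_le hc hcb
  rw [div_le_div_iff₀ hb hc]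
  nlinarith

theorem no_critical_points_main (f g : ℂ → ℂ)
    (hf : Differentiable ℂ f) (hg : Differentiable ℂ g)
    (m : ℕ) (hm : 1 ≤ m)
    (a : ℕ → ℂ) (ha : ∀ n, a n ≠ 0) (p : ℕ → ℕ)
    (t : ℝ) (ht : 0 < t) (h : ℕ → ℝ)
    (hfact : TendstoLocallyUniformly
      (fun (N : ℕ) (z : ℂ) => z ^ m * Complex.exp (g z) *
        ∏ n ∈ Finset.range N, weierstrassE (p n) (z / a n)) f Filter.atTop)
    (hh : ∀ n, t < h n) (hah : ∀ n, h n ≤ ‖a n‖)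
    (hp : ¬ Filter.Tendsto (fun n => (p n : ℝ)) Filter.atTop (nhds 0))
    (hhsum : Summable (fun n => 1 / h n))
    (hiv : ∀ z : ℂ, 0 < ‖z‖ → ‖z‖ < t →
      ‖deriv g z‖ + (∑' n, 1 / (h n - t)) +
        (∑' n, (1 - (t / h n) ^ (p n)) / (h n - t)) < (m : ℝ) / t) :
    ∀ z : ℂ, 0 < ‖z‖ → ‖z‖ < t → deriv f z ≠ 0 := by
  intro z hz0 hzt
  have hz : z ≠ 0 := by
    intro hc; rw [hc] at hz0; simp at hz0
  have hhn : ∀ n, 0 < h n := fun n => ht.trans (hh n)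
  have hht0 : ∀ n, 0 < h n - t := fun n => sub_pos.mpr (hh n)
  have hwle : ∀ n, ‖z / a n‖ ≤ t / h n := by
    intro n
    rw [norm_div]
    exact div_le_div₀ ht.le hzt.le (hhn n) (hah n)
  have hth1 : ∀ n, t / h n < 1 := fun n => (div_lt_one (hhn n)).mpr (hh n)
  have hth0 : ∀ n, 0 < t / h n := fun n => div_pos ht (hhn n)
  have hwlt : ∀ n, ‖z / a n‖ < 1 := fun n => (hwle n).trans_lt (hth1 n)
  have hwne1 : ∀ n, z / a n ≠ 1 := by
    intro n hc
    have hx := hwlt n; rw [hc] at hx; simp at hx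
  have hEne : ∀ n, weierstrassE (p n) (z / a n) ≠ 0 := fun n => weierstrassE_ne_zero (hwne1 n)
  have hEdiff : ∀ k, Differentiable ℂ (weierstrassE k) :=
    fun k w => (hasDerivAt_weierstrassE k w).differentiableAt
  have hudiff : ∀ n, Differentiable ℂ (fun x : ℂ => weierstrassE (p n) (x / a n)) :=
    fun n => (hEdiff (p n)).comp (differentiable_id.div_const (a n))
  -- h tends to infinity
  have hht : Filter.Tendsto h Filter.atTop Filter.atTop := by
    have h0 : Filter.Tendsto (fun n => 1 / h n) Filter.atTop (nhds 0) :=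
      hhsum.tendsto_atTop_zero
    have h0' : Filter.Tendsto (fun n => 1 / h n) Filter.atTop (nhdsWithin 0 (Set.Ioi 0)) :=
      tendsto_nhdsWithin_of_tendsto_nhds_of_eventually_within _ h0
        (Filter.Eventually.of_forall fun n => by
          have := hhn n; exact Set.mem_Ioi.mpr (by positivity))
    have h9 := h0'.inv_tendsto_nhdsGT_zero
    have heq : (fun n => 1 / h n)⁻¹ = h := by
      funext n; simp
    rwa [heq] at h9
  -- summability
  have hb1 : Summable (fun n => 1 / (h n - t)) := by
    apply summable_of_isBigO_nat hhsum
    rw [Asymptotics.isBigO_iff]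
    refine ⟨2, ?_⟩
    filter_upwards [hht.eventually_ge_atTop (2 * t)] with n hn
    have h1 : 0 < h n := hhn n
    have h2 : 0 < h n - t := hht0 n
    rw [Real.norm_eq_abs, Real.norm_eq_abs, abs_of_pos (by positivity),
      abs_of_pos (by positivity)]
    have h3 : h n / 2 ≤ h n - t := by linarith
    calc 1 / (h n - t) ≤ 1 / (h n / 2) :=
          one_div_le_one_div_of_le (by positivity) h3
      _ = 2 * (1 / h n) := by field_simp
  have hb2nonneg : ∀ n, 0 ≤ (1 - (t / h n) ^ p n) / (h n - t) := by
    intro n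
    have hx1 : (t / h n) ^ p n ≤ 1 := pow_le_one₀ (hth0 n).le (hth1 n).le
    have := hht0 n
    apply div_nonneg (by linarith) (by linarith)
  have hb2 : Summable (fun n => (1 - (t / h n) ^ p n) / (h n - t)) := by
    refine Summable.of_nonneg_of_le hb2nonneg (fun n => ?_) hb1
    have hx0 : 0 ≤ (t / h n) ^ p n := (pow_pos (hth0 n) _).le
    have := hht0 n
    apply div_le_div₀ (by positivity) (by linarith) this le_rfl
  set A := ‖deriv g z‖ with hA
  set T1 := ∑' n, 1 / (h n - t) with hT1
  set T2 := ∑' n, (1 - (t / h n) ^ p n) / (h n - t) with hT2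
  have hivz := hiv z hz0 hzt
  have hmz : (m : ℝ) / t ≤ (m : ℝ) / ‖z‖ :=
    my_div_le_div_left (Nat.cast_nonneg m) hz0 hzt.le
  set δ := (m : ℝ) / ‖z‖ - (A + T1 + T2) with hδ
  have hδpos : 0 < δ := by
    have : A + T1 + T2 < (m : ℝ) / t := hivz
    simp only [hδ]; linarith
  -- per-factor logDeriv value
  have hu : ∀ n, logDeriv (fun x => weierstrassE (p n) (x / a n)) z
      = -(z / a n) ^ p n / (1 - z / a n) * (1 / a n) := by
    intro n
    have hcomp : logDeriv (weierstrassE (p n) ∘ fun x => x / a n) z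
        = logDeriv (weierstrassE (p n)) (z / a n) * deriv (fun x : ℂ => x / a n) z :=
      logDeriv_comp ((hEdiff (p n)) _) ((differentiable_id.div_const (a n)) z)
    have hdz : deriv (fun x : ℂ => x / a n) z = 1 / a n := by
      simp [div_eq_mul_inv, one_div]
    rw [show (fun x => weierstrassE (p n) (x / a n))
        = weierstrassE (p n) ∘ fun x => x / a n from rfl,
      hcomp, logDeriv_weierstrassE _ (hwne1 n), hdz]
  -- per-factor bound
  have hq : ∀ n, ‖logDeriv (fun x => weierstrassE (p n) (x / a n)) z‖
      ≤ 1 / (h n - t) + (1 - (t / h n) ^ p n) / (h n - t) := by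
    intro n
    rw [hu n, norm_mul, norm_div, norm_div, norm_neg, norm_pow, norm_one]
    have h1w : 1 - t / h n ≤ ‖1 - z / a n‖ := by
      have h5 : 1 - ‖z / a n‖ ≤ ‖1 - z / a n‖ := by
        simpa using norm_sub_norm_le 1 (z / a n)
      have h2 := hwle n
      linarith
    have hden : h n - t ≤ ‖1 - z / a n‖ * ‖a n‖ := by
      calc h n - t = (1 - t / h n) * h n := by
            rw [sub_mul, one_mul, div_mul_cancel₀ _ (ne_of_gt (hhn n))]
        _ ≤ ‖1 - z / a n‖ * ‖a n‖ := by
            apply mul_le_mul h1w (hah n) (hhn n).le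
            exact le_trans (by have := hth1 n; linarith) h1w
    have key : ‖z / a n‖ ^ p n / ‖1 - z / a n‖ * (1 / ‖a n‖)
        ≤ (t / h n) ^ p n / (h n - t) := by
      rw [div_mul_eq_mul_div, mul_one_div, div_div]
      rw [mul_comm (‖a n‖)] at *
      apply div_le_div₀ (pow_nonneg (hth0 n).le _) _ (hht0 n) hden
      exact pow_le_pow_left₀ (norm_nonneg _) (hwle n) _
    have hx1 : (t / h n) ^ p n ≤ 1 := pow_le_one₀ (hth0 n).le (hth1 n).le
    have hle2 : (t / h n) ^ p n / (h n - t)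
        ≤ 1 / (h n - t) + (1 - (t / h n) ^ p n) / (h n - t) := by
      rw [← add_div]
      exact (div_le_div_iff_of_pos_right (hht0 n)).mpr (by linarith)
    exact key.trans hle2
  -- sum bound
  have hsum : ∀ N, ∑ n ∈ Finset.range N,
      ‖logDeriv (fun x => weierstrassE (p n) (x / a n)) z‖ ≤ T1 + T2 := by
    intro N
    calc ∑ n ∈ Finset.range N,
        ‖logDeriv (fun x => weierstrassE (p n) (x / a n)) z‖
        ≤ ∑ n ∈ Finset.range N,
            (1 / (h n - t) + (1 - (t / h n) ^ p n) / (h n - t)) :=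
          Finset.sum_le_sum fun n _ => hq n
      _ = ∑ n ∈ Finset.range N, 1 / (h n - t)
          + ∑ n ∈ Finset.range N, (1 - (t / h n) ^ p n) / (h n - t) :=
          Finset.sum_add_distrib
      _ ≤ T1 + T2 := add_le_add
          (hb1.sum_le_tsum _ (fun n _ => by have := hht0 n; positivity))
          (hb2.sum_le_tsum _ (fun n _ => hb2nonneg n))
  -- the partial products
  set F : ℕ → ℂ → ℂ := fun N x => x ^ m * Complex.exp (g x) *
      ∏ n ∈ Finset.range N, weierstrassE (p n) (x / a n) with hFdef
  have hFdiff : ∀ N, Differentiable ℂ (F N) := by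
    intro N x
    exact (((differentiable_pow m).mul (Complex.differentiable_exp.comp hg)) x).mul
      (DifferentiableAt.fun_finsetProd fun n _ => (hudiff n) x)
  have hFne : ∀ N, F N z ≠ 0 := fun N =>
    mul_ne_zero (mul_ne_zero (pow_ne_zero m hz) (Complex.exp_ne_zero _))
      (Finset.prod_ne_zero_iff.mpr fun n _ => hEne n)
  have hlogF : ∀ N, logDeriv (F N) z = (m : ℂ) / z + (deriv g z
      + ∑ n ∈ Finset.range N, logDeriv (fun x => weierstrassE (p n) (x / a n)) z) := by
    intro N
    have e1 : logDeriv (F N) z = logDeriv (fun x : ℂ => x ^ m * Complex.exp (g x)) z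
        + logDeriv (fun x : ℂ => ∏ n ∈ Finset.range N, weierstrassE (p n) (x / a n)) z :=
      logDeriv_mul z (mul_ne_zero (pow_ne_zero m hz) (Complex.exp_ne_zero _))
        (Finset.prod_ne_zero_iff.mpr fun n _ => hEne n)
        (((differentiable_pow m).mul (Complex.differentiable_exp.comp hg)) z)
        (DifferentiableAt.fun_finsetProd fun n _ => (hudiff n) z)
    have e2 : logDeriv (fun x : ℂ => x ^ m * Complex.exp (g x)) z
        = logDeriv (fun x : ℂ => x ^ m) z + logDeriv (fun x : ℂ => Complex.exp (g x)) z :=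
      logDeriv_mul z (pow_ne_zero m hz) (Complex.exp_ne_zero _) ((differentiable_pow m) z)
        ((Complex.differentiable_exp.comp hg) z)
    have e3 : logDeriv (fun x : ℂ => x ^ m) z = (m : ℂ) / z := logDeriv_pow z m
    have e4 : logDeriv (fun x : ℂ => Complex.exp (g x)) z = deriv g z := by
      have hc : logDeriv (Complex.exp ∘ g) z = logDeriv Complex.exp (g z) * deriv g z :=
        logDeriv_comp (Complex.differentiable_exp _) (hg z)
      simp only [Function.comp_def] at hc
      rw [hc, logDeriv_apply, Complex.deriv_exp, div_self (Complex.exp_ne_zero _), one_mul]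
    have e5 : logDeriv (fun x : ℂ => ∏ n ∈ Finset.range N, weierstrassE (p n) (x / a n)) z
        = ∑ n ∈ Finset.range N, logDeriv (fun x => weierstrassE (p n) (x / a n)) z :=
      logDeriv_prod (s := Finset.range N) (f := fun n x => weierstrassE (p n) (x / a n)) (x := z)
        (fun n _ => hEne n) (fun n _ => (hudiff n) z)
    rw [e1, e2, e3, e4, e5, add_assoc]
  -- lower bound on |logDeriv (F N) z|
  have hlow : ∀ N, δ ≤ ‖logDeriv (F N) z‖ := by
    intro N
    rw [hlogF N]
    set R := deriv g z
      + ∑ n ∈ Finset.range N, logDeriv (fun x => weierstrassE (p n) (x / a n)) z with hR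
    have hRb : ‖R‖ ≤ A + (T1 + T2) := by
      calc ‖R‖ ≤ A + ‖∑ n ∈ Finset.range N,
            logDeriv (fun x => weierstrassE (p n) (x / a n)) z‖ := norm_add_le _ _
        _ ≤ A + (T1 + T2) := by
            have h6 := (norm_sum_le (Finset.range N)
              (fun n => logDeriv (fun x => weierstrassE (p n) (x / a n)) z)).trans (hsum N)
            linarith
    have habsmz : ‖(m : ℂ) / z‖ = (m : ℝ) / ‖z‖ := by
      rw [norm_div, Complex.norm_natCast]
    have htri : ‖(m : ℂ) / z‖ - ‖R‖
        ≤ ‖(m : ℂ) / z + R‖ := by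
      have h7 := norm_add_le ((m : ℂ) / z + R) (-R)
      simp only [add_neg_cancel_right, norm_neg] at h7
      linarith
    simp only [hδ]
    rw [habsmz] at htri
    linarith
  -- lower bound on |F N z|
  set σ := ‖z‖ / t with hσdef
  have hσ1 : σ < 1 := (div_lt_one ht).mpr hzt
  have hσ0 : 0 < σ := div_pos hz0 ht
  set C := ‖z‖ / (1 - σ) with hCdef
  have hC0 : 0 < C := div_pos hz0 (by linarith)
  set K := ∑' n, C * (1 / h n) with hK
  have hEabs : ∀ n, Real.exp (-(2 * (C * (1 / h n))))
      ≤ ‖weierstrassE (p n) (z / a n)‖ := by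
    intro n
    have h2 := abs_weierstrassE_ge (p n) (hwlt n)
    have hwn : ‖z / a n‖ ≤ ‖z‖ / h n := by
      rw [norm_div]
      exact my_div_le_div_left hz0.le (hhn n) (hah n)
    have hσn : ‖z‖ / h n ≤ σ := by
      rw [hσdef]
      exact my_div_le_div_left hz0.le ht (hh n).le
    have hwσ : ‖z / a n‖ ≤ σ := hwn.trans hσn
    have h1w : 0 < 1 - ‖z / a n‖ := by linarith
    have hlog : -(C * (1 / h n)) ≤ Real.log (1 - ‖z / a n‖) := by
      have hl := Real.log_le_sub_one_of_pos (x := (1 - ‖z / a n‖)⁻¹)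
        (by positivity)
      rw [Real.log_inv] at hl
      have hone : (1 : ℝ) - ‖z / a n‖ ≠ 0 := ne_of_gt h1w
      have hfrac : (1 - ‖z / a n‖)⁻¹ - 1
          = ‖z / a n‖ / (1 - ‖z / a n‖) := by
        rw [eq_div_iff hone, sub_mul, inv_mul_cancel₀ hone, one_mul]
        ring
      rw [hfrac] at hl
      have hbound : ‖z / a n‖ / (1 - ‖z / a n‖) ≤ C * (1 / h n) := by
        have hCn : C * (1 / h n) = (‖z‖ / h n) / (1 - σ) := by
          rw [hCdef]; field_simp
        rw [hCn]
        apply div_le_div₀ (div_nonneg hz0.le (hhn n).le) hwn (by linarith) (by linarith)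
      linarith
    have hexp1 : Real.exp (-(C * (1 / h n))) ≤ 1 - ‖z / a n‖ := by
      rw [← Real.exp_log h1w]
      exact Real.exp_le_exp.mpr hlog
    calc Real.exp (-(2 * (C * (1 / h n)))) = Real.exp (-(C * (1 / h n))) ^ 2 := by
          rw [sq, ← Real.exp_add]; ring_nf
      _ ≤ (1 - ‖z / a n‖) ^ 2 :=
          pow_le_pow_left₀ (Real.exp_nonneg _) hexp1 2
      _ ≤ _ := h2
  have hKb : ∀ N, ∑ n ∈ Finset.range N, C * (1 / h n) ≤ K := fun N =>
    (hhsum.mul_left C).sum_le_tsum _ (fun n _ => by have := hhn n; positivity)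
  have hFabs : ∀ N, ‖z‖ ^ m * Real.exp ((g z).re) * Real.exp (-(2 * K))
      ≤ ‖F N z‖ := by
    intro N
    have hFz : ‖F N z‖ = ‖z‖ ^ m * Real.exp ((g z).re)
        * ∏ n ∈ Finset.range N, ‖weierstrassE (p n) (z / a n)‖ := by
      simp only [hFdef]
      rw [norm_mul, norm_mul, norm_pow, Complex.norm_exp, norm_prod]
    rw [hFz]
    have hprod : Real.exp (-(2 * K))
        ≤ ∏ n ∈ Finset.range N, ‖weierstrassE (p n) (z / a n)‖ := by
      calc Real.exp (-(2 * K))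
          ≤ Real.exp (-(2 * ∑ n ∈ Finset.range N, C * (1 / h n))) := by
            apply Real.exp_le_exp.mpr
            have := hKb N; linarith
        _ = ∏ n ∈ Finset.range N, Real.exp (-(2 * (C * (1 / h n)))) := by
            rw [← Real.exp_sum]
            congr 1
            rw [Finset.mul_sum, ← Finset.sum_neg_distrib]
        _ ≤ _ := Finset.prod_le_prod (fun n _ => Real.exp_nonneg _) (fun n _ => hEabs n)
    have hpos : (0:ℝ) ≤ ‖z‖ ^ m * Real.exp ((g z).re) := by positivity
    exact mul_le_mul_of_nonneg_left hprod hpos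
  set c' := ‖z‖ ^ m * Real.exp ((g z).re) * Real.exp (-(2 * K)) with hc'
  have hc'pos : 0 < c' := by positivity
  have hderF : ∀ N, c' * δ ≤ ‖deriv (F N) z‖ := by
    intro N
    have hd : deriv (F N) z = F N z * logDeriv (F N) z := by
      rw [logDeriv_apply, mul_comm, div_mul_cancel₀ _ (hFne N)]
    rw [hd, norm_mul]
    exact mul_le_mul (hFabs N) (hlow N) hδpos.le (norm_nonneg _)
  have hTLU := (tendstoLocallyUniformlyOn_univ.mpr hfact).deriv
    (Filter.Eventually.of_forall fun N => (hFdiff N).differentiableOn) isOpen_univ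
  have hder : Filter.Tendsto (fun N => deriv (F N) z) Filter.atTop (nhds (deriv f z)) :=
    hTLU.tendsto_at (Set.mem_univ z)
  have habs : Filter.Tendsto (fun N => ‖deriv (F N) z‖) Filter.atTop
      (nhds (‖deriv f z‖)) := (continuous_norm.tendsto _).comp hder
  have hfinal : c' * δ ≤ ‖deriv f z‖ := ge_of_tendsto' habs hderF
  intro hc
  rw [hc] at hfinal
  simp only [norm_zero] at hfinal
  nlinarith
end

section
/- Let g be an entire function, m ≥ 1 an integer, t > 0, and (a_n)_{n≥1} a sequence of nonzero complex numbers satisfying |a_n| ≥ h(n) > t for all n, where h : ℕ → ℝ⁺ satisfies ∑_{n=1}^∞ 1/h(n) < +∞. Suppose m/t > 2·∑_{n=1}^∞ 1/(h(n) − t). Let M := sup_{|z| ≤ t} |g'(z)|, assume M > 0, and set R := 2M / ( m/t − 2·∑_{n=1}^∞ 1/(h(n) − t) ) and θ(z) := g(z)/R. Then the entire function f(z) := z^m·e^{θ(z)}·∏_{n=1}^∞ E_n(z/a_n) has no critical point in B(0,t) \ {0}; that is, f'(z) ≠ 0 for all z with 0 < |z| < t. -/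
set_option maxHeartbeats 1000000

open Complex Finset Metric

noncomputable def wlog (k : ℕ) (w : ℂ) : ℂ :=
  Complex.log (1 - w) + ∑ j ∈ Finset.range k, w ^ (j + 1) / (j + 1)

lemma aux_ne_one {w : ℂ} (hw : ‖w‖ < 1) : w ≠ 1 := fun h => by simp [h] at hw

lemma wE_eq_exp (k : ℕ) {w : ℂ} (hw : ‖w‖ < 1) :
    weierstrassE k w = Complex.exp (wlog k w) := by
  rw [weierstrassE, wlog, Complex.exp_add,
    Complex.exp_log (sub_ne_zero.mpr (aux_ne_one hw).symm)]

lemma wlog_hasSum (k : ℕ) {w : ℂ} (hw : ‖w‖ < 1) :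
    HasSum (fun i : ℕ => w ^ (i + (k + 1)) / ((i + (k + 1) : ℕ) : ℂ)) (-(wlog k w)) := by
  have h0 := Complex.hasSum_taylorSeries_neg_log hw
  have hT : (∑ i ∈ range (k + 1), w ^ i / (i : ℂ)) =
      ∑ j ∈ range k, w ^ (j + 1) / (j + 1) := by
    rw [Finset.sum_range_succ']
    push_cast
    simp
  have h1 : HasSum (fun n : ℕ => w ^ n / (n : ℂ))
      (-(wlog k w) + ∑ i ∈ range (k + 1), w ^ i / (i : ℂ)) := by
    rw [hT, wlog]
    convert h0 using 1
    ring
  exact (hasSum_nat_add_iff (f := fun n : ℕ => w ^ n / (n : ℂ)) (k + 1)).mpr h1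

lemma wlog_norm_le (k : ℕ) {w : ℂ} {q : ℝ} (hw : ‖w‖ ≤ q) (hq : q < 1) :
    ‖wlog k w‖ ≤ q ^ (k + 1) / (1 - q) := by
  have h0q : 0 ≤ q := (norm_nonneg w).trans hw
  have hw1 : ‖w‖ < 1 := hw.trans_lt hq
  have hs := wlog_hasSum k hw1
  have hb : ∀ i : ℕ, ‖w ^ (i + (k + 1)) / ((i + (k + 1) : ℕ) : ℂ)‖ ≤ q ^ (k + 1) * q ^ i := by
    intro i
    rw [norm_div, norm_pow]
    have h1 : (1 : ℝ) ≤ ‖((i + (k + 1) : ℕ) : ℂ)‖ := by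
      rw [Complex.norm_natCast]
      exact_mod_cast Nat.one_le_iff_ne_zero.mpr (by omega)
    calc ‖w‖ ^ (i + (k + 1)) / ‖((i + (k + 1) : ℕ) : ℂ)‖
        ≤ ‖w‖ ^ (i + (k + 1)) := div_le_self (by positivity) h1
      _ ≤ q ^ (i + (k + 1)) := pow_le_pow_left₀ (norm_nonneg w) hw _
      _ = q ^ (k + 1) * q ^ i := by rw [pow_add]; ring
  have hgs : Summable (fun i : ℕ => q ^ (k + 1) * q ^ i) :=
    (summable_geometric_of_lt_one h0q hq).mul_left _
  have hsn : Summable (fun i : ℕ => ‖w ^ (i + (k + 1)) / ((i + (k + 1) : ℕ) : ℂ)‖) :=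
    Summable.of_nonneg_of_le (fun i => norm_nonneg _) hb hgs
  have heq : ‖wlog k w‖ = ‖∑' i : ℕ, w ^ (i + (k + 1)) / ((i + (k + 1) : ℕ) : ℂ)‖ := by
    rw [hs.tsum_eq, norm_neg]
  rw [heq]
  calc ‖∑' i : ℕ, w ^ (i + (k + 1)) / ((i + (k + 1) : ℕ) : ℂ)‖
      ≤ ∑' i : ℕ, ‖w ^ (i + (k + 1)) / ((i + (k + 1) : ℕ) : ℂ)‖ := norm_tsum_le_tsum_norm hsn
    _ ≤ ∑' i : ℕ, q ^ (k + 1) * q ^ i := Summable.tsum_le_tsum hb hsn hgs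
    _ = q ^ (k + 1) * (1 - q)⁻¹ := by rw [tsum_mul_left, tsum_geometric_of_lt_one h0q hq]
    _ = q ^ (k + 1) / (1 - q) := (div_eq_mul_inv _ _).symm

lemma wlog_hasDerivAt (k : ℕ) {a z : ℂ} (ha : a ≠ 0) (h : ‖z / a‖ < 1) :
    HasDerivAt (fun x => wlog k (x / a)) (-((z / a) ^ k / (a * (1 - z / a)))) z := by
  have hw1 : z / a ≠ 1 := aux_ne_one h
  have h1w : (1 : ℂ) - z / a ≠ 0 := sub_ne_zero.mpr hw1.symm
  have hid : HasDerivAt (fun x : ℂ => x / a) (1 / a) z := by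
    simpa using (hasDerivAt_id z).div_const a
  have hin : HasDerivAt (fun x : ℂ => 1 - x / a) (-(1 / a)) z := by
    simpa using hid.const_sub (1 : ℂ)
  have hsp : (1 : ℂ) - z / a ∈ Complex.slitPlane := by
    have := Complex.mem_slitPlane_of_norm_lt_one (z := -(z / a)) (by simpa using h)
    simpa [sub_eq_add_neg] using this
  have hlog : HasDerivAt (fun x => Complex.log (1 - x / a)) (-(1 / a) / (1 - z / a)) z :=
    hin.clog hsp
  have hsum : HasDerivAt (fun x => ∑ j ∈ range k, (x / a) ^ (j + 1) / (j + 1))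
      (∑ j ∈ range k, (z / a) ^ j / a) z := by
    apply HasDerivAt.fun_sum
    intro j hj
    have h2 := (hid.pow (j + 1)).div_const ((j : ℂ) + 1)
    refine h2.congr_deriv ?_
    have hj1 : ((j : ℂ) + 1) ≠ 0 := Nat.cast_add_one_ne_zero j
    simp only [Nat.add_sub_cancel, Nat.cast_add, Nat.cast_one]
    field_simp
  have total := hlog.add hsum
  have hfun : (fun x => wlog k (x / a)) =
      fun x => Complex.log (1 - x / a) + ∑ j ∈ range k, (x / a) ^ (j + 1) / (j + 1) := rfl
  rw [hfun]
  have haz : a - z ≠ 0 := by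
    intro h0
    rw [sub_eq_zero] at h0
    exact hw1 (by rw [← h0, div_self ha])
  refine total.congr_deriv ?_
  rw [← Finset.sum_div, geom_sum_eq hw1]
  generalize z / a = w at hw1 h1w ⊢
  have hw1' : w - 1 ≠ 0 := sub_ne_zero.mpr hw1
  field_simp
  ring

noncomputable def auxE (a : ℕ → ℂ) (n : ℕ) (z : ℂ) : ℂ := weierstrassE (n + 1) (z / a n)
noncomputable def auxP (a : ℕ → ℂ) (z : ℂ) : ℂ := ∏' n, auxE a n z
noncomputable def auxl (a : ℕ → ℂ) (n : ℕ) (z : ℂ) : ℂ := wlog (n + 1) (z / a n)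
noncomputable def auxL (a : ℕ → ℂ) (z : ℂ) : ℂ := ∑' n, auxl a n z

lemma auxE_diff (a : ℕ → ℂ) (n : ℕ) : Differentiable ℂ (auxE a n) := by
  unfold auxE weierstrassE
  apply Differentiable.mul
  · exact (differentiable_const 1).sub (differentiable_id.div_const _)
  · apply Differentiable.cexp
    apply Differentiable.fun_sum
    intro j hj
    exact ((differentiable_id.div_const _).pow _).div_const _

theorem no_critical_points_corollary (g : ℂ → ℂ) (hg : Differentiable ℂ g)
    (m : ℕ) (hm : 1 ≤ m) (t : ℝ) (ht : 0 < t)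
    (a : ℕ → ℂ) (ha : ∀ n, a n ≠ 0)
    (h : ℕ → ℝ) (hh : ∀ n, t < h n) (hah : ∀ n, h n ≤ ‖a n‖)
    (hhsum : Summable (fun n => 1 / h n))
    (hmt : 2 * ∑' n, 1 / (h n - t) < (m : ℝ) / t)
    (M : ℝ) (hM : M = sSup ((fun z => ‖deriv g z‖) '' Metric.closedBall 0 t))
    (hMpos : 0 < M)
    (R : ℝ) (hR : R = 2 * M / ((m : ℝ) / t - 2 * ∑' n, 1 / (h n - t)))
    (θ : ℂ → ℂ) (hθ : ∀ z, θ z = g z / (R : ℂ))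
    (f : ℂ → ℂ)
    (hf : ∀ z, f z = z ^ m * Complex.exp (θ z) * ∏' n, weierstrassE (n + 1) (z / a n)) :
    Differentiable ℂ f ∧
      ∀ z : ℂ, 0 < ‖z‖ → ‖z‖ < t → deriv f z ≠ 0 := by
  have hhpos : ∀ n, (0 : ℝ) < h n := fun n => ht.trans (hh n)
  have hhtpos : ∀ n, (0 : ℝ) < h n - t := fun n => sub_pos.mpr (hh n)
  have hanorm : ∀ n, h n ≤ ‖a n‖ := hah
  have hapos : ∀ n, (0 : ℝ) < ‖a n‖ := fun n => (hhpos n).trans_le (hanorm n)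
  -- h tends to infinity
  have hinv0 : Filter.Tendsto (fun n => 1 / h n) Filter.atTop (nhds 0) :=
    hhsum.tendsto_atTop_zero
  have htend : Filter.Tendsto h Filter.atTop Filter.atTop := by
    have h1 : Filter.Tendsto (fun n => 1 / h n) Filter.atTop (nhdsWithin 0 (Set.Ioi 0)) := by
      apply tendsto_nhdsWithin_of_tendsto_nhds_of_eventually_within _ hinv0
      exact Filter.Eventually.of_forall fun n => one_div_pos.mpr (hhpos n)
    have h2 := tendsto_inv_nhdsGT_zero.comp h1
    refine h2.congr fun n => ?_
    simp [one_div]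
  -- summability of 1/(h n - t)
  have hSsum : Summable (fun n => 1 / (h n - t)) := by
    obtain ⟨N, hN⟩ := Filter.eventually_atTop.mp (htend.eventually_ge_atTop (2 * t))
    rw [← summable_nat_add_iff N]
    have hbig : Summable (fun i : ℕ => 2 * (1 / h (i + N))) :=
      (summable_nat_add_iff N).mpr (hhsum.mul_left 2)
    refine Summable.of_nonneg_of_le (fun i => (one_div_pos.mpr (hhtpos _)).le)
      (fun i => ?_) hbig
    have h2t : 2 * t ≤ h (i + N) := hN (i + N) (Nat.le_add_left N i)
    rw [mul_one_div]
    rw [div_le_div_iff₀ (hhtpos _) (hhpos _)]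
    nlinarith [hhpos (i + N)]
  set S : ℝ := ∑' n, 1 / (h n - t) with hSdef
  have hSnonneg : 0 ≤ S := tsum_nonneg fun n => (one_div_pos.mpr (hhtpos n)).le
  have hd : 0 < (m : ℝ) / t - 2 * S := sub_pos.mpr hmt
  have hRpos : 0 < R := by rw [hR]; exact div_pos (by linarith) hd
  have hMR : M / R = ((m : ℝ) / t - 2 * S) / 2 := by
    rw [hR, div_div_eq_mul_div, show (2 : ℝ) * M = M * 2 from mul_comm 2 M,
      mul_div_mul_left _ _ hMpos.ne']
  -- bound on deriv g
  have hdgc : Continuous (deriv g) :=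
    (hg.contDiff (n := 2)).continuous_deriv (by norm_num)
  have hMb : ∀ z ∈ Metric.closedBall (0 : ℂ) t, ‖deriv g z‖ ≤ M := by
    intro z hz
    rw [hM]
    apply le_csSup
    · exact ((isCompact_closedBall (0 : ℂ) t).image
        (continuous_norm.comp hdgc)).bddAbove
    · exact Set.mem_image_of_mem _ hz
  -- the open ball U
  set U := Metric.ball (0 : ℂ) t with hUdef
  have hUopen : IsOpen U := Metric.isOpen_ball
  have hq1 : ∀ n, t / h n < 1 := fun n => (div_lt_one (hhpos n)).mpr (hh n)
  have hq0 : ∀ n, 0 ≤ t / h n := fun n => (div_pos ht (hhpos n)).le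
  have hwle : ∀ n, ∀ z ∈ U, ‖z / a n‖ ≤ t / h n := by
    intro n z hz
    rw [norm_div]
    exact div_le_div₀ ht.le (mem_ball_zero_iff.mp hz).le (hhpos n) (hanorm n)
  have hw1 : ∀ n, ∀ z ∈ U, ‖z / a n‖ < 1 := fun n z hz => (hwle n z hz).trans_lt (hq1 n)
  -- bounds for auxl on U
  have hub : Summable (fun n => t / (h n - t)) := by
    refine (hSsum.mul_left t).congr fun n => ?_
    rw [mul_one_div]
  have hlb : ∀ n, ∀ z ∈ U, ‖auxl a n z‖ ≤ t / (h n - t) := by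
    intro n z hz
    refine (wlog_norm_le (n + 1) (hwle n z hz) (hq1 n)).trans ?_
    have h1 : 1 - t / h n = (h n - t) / h n := by
      rw [sub_div, div_self (hhpos n).ne']
    rw [h1, div_div_eq_mul_div]
    have h2 : (t / h n) ^ (n + 1 + 1) ≤ t / h n :=
      pow_le_of_le_one (hq0 n) (hq1 n).le (by omega)
    calc (t / h n) ^ (n + 1 + 1) * h n / (h n - t)
        ≤ t / h n * h n / (h n - t) := by
          gcongr
          all_goals first | exact h2 | linarith [hhtpos n, hhpos n]
      _ = t / (h n - t) := by rw [div_mul_cancel₀ _ (hhpos n).ne']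
  have hldiff : ∀ n, DifferentiableOn ℂ (auxl a n) U := by
    intro n z hz
    exact ((wlog_hasDerivAt (n + 1) (ha n) (hw1 n z hz)).differentiableAt).differentiableWithinAt
  have hLdiff : DifferentiableOn ℂ (auxL a) U :=
    differentiableOn_tsum_of_summable_norm hub hldiff hUopen (fun n z hz => hlb n z hz)
  have hLder : ∀ z ∈ U, HasSum (fun n => deriv (auxl a n) z) (deriv (auxL a) z) :=
    fun z hz => hasSum_deriv_of_summable_norm hub hldiff hUopen (fun n w hw => hlb n w hw) hz
  -- deriv of auxl and its bound
  have hldval : ∀ n, ∀ z ∈ U,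
      deriv (auxl a n) z = -((z / a n) ^ (n + 1) / (a n * (1 - z / a n))) :=
    fun n z hz => (wlog_hasDerivAt (n + 1) (ha n) (hw1 n z hz)).deriv
  have hldb : ∀ n, ∀ z ∈ U, ‖deriv (auxl a n) z‖ ≤ 1 / (h n - t) := by
    intro n z hz
    rw [hldval n z hz, norm_neg, norm_div, norm_mul, norm_pow]
    have hden : h n - t ≤ ‖a n‖ * ‖1 - z / a n‖ := by
      have h2 : 1 - t / h n ≤ ‖1 - z / a n‖ := by
        calc 1 - t / h n ≤ 1 - ‖z / a n‖ := by linarith [hwle n z hz]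
          _ ≤ ‖1 - z / a n‖ := by
            have h5 := norm_sub_norm_le (1 : ℂ) (z / a n)
            rwa [norm_one] at h5
      have h3 : h n * (1 - t / h n) = h n - t := by
        rw [mul_sub, mul_one, mul_comm (h n) (t / h n), div_mul_cancel₀ t (hhpos n).ne']
      calc h n - t = h n * (1 - t / h n) := h3.symm
        _ ≤ ‖a n‖ * ‖1 - z / a n‖ :=
            mul_le_mul (hanorm n) h2 (by linarith [hq1 n]) (norm_nonneg _)
    have hnum : ‖z / a n‖ ^ (n + 1) ≤ 1 :=
      pow_le_one₀ (norm_nonneg _) (hw1 n z hz).le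
    exact div_le_div₀ zero_le_one hnum (hhtpos n) hden
  -- P = exp ∘ L on U
  have hlsum : ∀ z ∈ U, Summable (fun n => auxl a n z) := fun z hz =>
    Summable.of_norm (Summable.of_nonneg_of_le (fun n => norm_nonneg _)
      (fun n => hlb n z hz) hub)
  have hPU : ∀ z ∈ U, HasProd (fun n => auxE a n z) (Complex.exp (auxL a z)) := by
    intro z hz
    have hs : HasSum (fun n => auxl a n z) (auxL a z) := (hlsum z hz).hasSum
    have he : (fun n => auxE a n z) = (Complex.exp ∘ fun n => auxl a n z) := by
      funext n; exact wE_eq_exp (n + 1) (hw1 n z hz)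
    rw [he]
    exact hs.cexp
  have hPz : ∀ z ∈ U, auxP a z = Complex.exp (auxL a z) := fun z hz => (hPU z hz).tprod_eq
  -- Part 1 : differentiability of auxP everywhere
  have hPdiff : Differentiable ℂ (auxP a) := by
    intro z0
    set r : ℝ := ‖z0‖ + 1 with hrdef
    have hrpos : 0 < r := by positivity
    have hz0r : z0 ∈ Metric.ball (0 : ℂ) r := mem_ball_zero_iff.mpr (lt_add_one _)
    obtain ⟨N, hN⟩ := Filter.eventually_atTop.mp (htend.eventually_gt_atTop (2 * r))
    have hrw : ∀ i : ℕ, ∀ z ∈ Metric.ball (0 : ℂ) r, ‖z / a (i + N)‖ ≤ 1 / 2 := by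
      intro i z hz
      have h2r : 2 * r < h (i + N) := hN (i + N) (Nat.le_add_left N i)
      rw [norm_div]
      have : ‖z‖ / ‖a (i + N)‖ ≤ r / (2 * r) :=
        div_le_div₀ hrpos.le (mem_ball_zero_iff.mp hz).le (by positivity)
          (le_trans h2r.le (hanorm _))
      calc ‖z‖ / ‖a (i + N)‖ ≤ r / (2 * r) := this
        _ = 1 / 2 := by field_simp
    have hrw1 : ∀ i : ℕ, ∀ z ∈ Metric.ball (0 : ℂ) r, ‖z / a (i + N)‖ < 1 :=
      fun i z hz => (hrw i z hz).trans_lt (by norm_num)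
    have hgeo : Summable (fun i : ℕ => ((1 : ℝ) / 2) ^ i) :=
      summable_geometric_of_lt_one (by norm_num) (by norm_num)
    have htb : ∀ i : ℕ, ∀ z ∈ Metric.ball (0 : ℂ) r,
        ‖auxl a (i + N) z‖ ≤ ((1 : ℝ) / 2) ^ i := by
      intro i z hz
      refine (wlog_norm_le (i + N + 1) (hrw i z hz) (by norm_num)).trans ?_
      have : ((1 : ℝ) / 2) ^ (i + N + 1 + 1) / (1 - 1 / 2) = ((1 : ℝ) / 2) ^ (i + N + 1) := by
        rw [pow_succ]
        ring
      rw [this]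
      exact pow_le_pow_of_le_one (by norm_num) (by norm_num) (by omega)
    have htaildiff : ∀ i : ℕ, DifferentiableOn ℂ (fun z => auxl a (i + N) z)
        (Metric.ball (0 : ℂ) r) := by
      intro i z hz
      exact ((wlog_hasDerivAt (i + N + 1) (ha _)
        (hrw1 i z hz)).differentiableAt).differentiableWithinAt
    have hQdiff : DifferentiableOn ℂ (fun z => ∑' i, auxl a (i + N) z)
        (Metric.ball (0 : ℂ) r) :=
      differentiableOn_tsum_of_summable_norm hgeo htaildiff Metric.isOpen_ball
        (fun i z hz => htb i z hz)
    have hQ : ∀ z ∈ Metric.ball (0 : ℂ) r,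
        HasProd (fun i => auxE a (i + N) z) (Complex.exp (∑' i, auxl a (i + N) z)) := by
      intro z hz
      have hs : HasSum (fun i => auxl a (i + N) z) (∑' i, auxl a (i + N) z) :=
        (Summable.of_norm (Summable.of_nonneg_of_le (fun i => norm_nonneg _)
          (fun i => htb i z hz) hgeo)).hasSum
      have he : (fun i => auxE a (i + N) z) = (Complex.exp ∘ fun i => auxl a (i + N) z) := by
        funext i; exact wE_eq_exp (i + N + 1) (hrw1 i z hz)
      rw [he]
      exact hs.cexp
    have hPrep : ∀ z ∈ Metric.ball (0 : ℂ) r,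
        auxP a z = (∏ n ∈ Finset.range N, auxE a n z) *
          Complex.exp (∑' i, auxl a (i + N) z) := by
      intro z hz
      let e : ℕ ≃ ↥((↑(Finset.range N) : Set ℕ)ᶜ) :=
        ⟨fun i => ⟨i + N, by
            simp only [Set.mem_compl_iff, Finset.coe_range, Set.mem_Iio, not_lt]
            omega⟩,
         fun p => p.1 - N,
         fun i => by simp,
         fun p => Subtype.ext (by
            have hp := p.2
            simp only [Set.mem_compl_iff, Finset.coe_range, Set.mem_Iio, not_lt] at hp
            simp only [Subtype.coe_mk]
            omega)⟩
      have ha1 : HasProd ((fun n => auxE a n z) ∘ (↑) : (↑(Finset.range N) : Set ℕ) → ℂ)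
          (∏ n ∈ Finset.range N, auxE a n z) := by
        have h5 := hasProd_fintype
          (fun i : (↑(Finset.range N) : Set ℕ) => auxE a (↑i) z)
        have h6 : (∏ i : (↑(Finset.range N) : Set ℕ), auxE a (↑i) z) =
            ∏ n ∈ Finset.range N, auxE a n z :=
          Finset.prod_finset_coe (fun n => auxE a n z) (Finset.range N)
        rw [h6] at h5
        exact h5
      have hb1 : HasProd ((fun n => auxE a n z) ∘ (↑) : ↥((↑(Finset.range N) : Set ℕ)ᶜ) → ℂ)
          (Complex.exp (∑' i, auxl a (i + N) z)) :=
        (e.hasProd_iff).mp (hQ z hz)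
      exact (ha1.mul_compl hb1).tprod_eq
    have hrhs : DifferentiableOn ℂ (fun z => (∏ n ∈ Finset.range N, auxE a n z) *
        Complex.exp (∑' i, auxl a (i + N) z)) (Metric.ball (0 : ℂ) r) := by
      apply DifferentiableOn.mul
      · exact (Differentiable.fun_finset_prod (fun n _ => auxE_diff a n)).differentiableOn
      · exact hQdiff.cexp
    have : DifferentiableOn ℂ (auxP a) (Metric.ball (0 : ℂ) r) :=
      hrhs.congr hPrep
    exact (this.differentiableAt (Metric.isOpen_ball.mem_nhds hz0r))
  -- differentiability of f
  have hθfun : θ = fun z => g z / (R : ℂ) := funext hθ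
  have hθdiff : Differentiable ℂ θ := by rw [hθfun]; exact hg.div_const _
  have hfeq : f = fun z => z ^ m * Complex.exp (θ z) * auxP a z := funext fun z => hf z
  have hfdiff : Differentiable ℂ f := by
    rw [hfeq]
    exact ((differentiable_pow m).mul hθdiff.cexp).mul hPdiff
  refine ⟨hfdiff, ?_⟩
  intro z hz0 hzt
  have hzU : z ∈ U := mem_ball_zero_iff.mpr hzt
  have hzne : z ≠ 0 := by
    intro h0
    rw [h0] at hz0
    simp at hz0
  obtain ⟨m', rfl⟩ : ∃ m', m = m' + 1 := ⟨m - 1, (Nat.succ_pred_eq_of_pos hm).symm⟩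
  -- local expression for f near z
  have hfeq2 : f =ᶠ[nhds z] fun x => x ^ (m' + 1) * Complex.exp (θ x + auxL a x) := by
    filter_upwards [hUopen.mem_nhds hzU] with x hx
    rw [hf x, show (∏' n, weierstrassE (n + 1) (x / a n)) = auxP a x from rfl,
      hPz x hx, mul_assoc, ← Complex.exp_add]
  have hθdz : HasDerivAt θ (deriv g z / (R : ℂ)) z := by
    rw [hθfun]
    exact ((hg z).hasDerivAt).div_const _
  have hLz : HasDerivAt (auxL a) (deriv (auxL a) z) z :=
    ((hLdiff.differentiableAt (hUopen.mem_nhds hzU))).hasDerivAt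
  set c : ℂ := deriv g z / (R : ℂ) + deriv (auxL a) z with hcdef
  have hFd : HasDerivAt (fun x => x ^ (m' + 1) * Complex.exp (θ x + auxL a x))
      ((↑(m' + 1) * z ^ (m' + 1 - 1)) * Complex.exp (θ z + auxL a z) +
        z ^ (m' + 1) * (Complex.exp (θ z + auxL a z) * c)) z :=
    (hasDerivAt_pow (m' + 1) z).mul ((hθdz.add hLz).cexp)
  have hderiv : deriv f z = (↑(m' + 1) * z ^ (m' + 1 - 1)) * Complex.exp (θ z + auxL a z) +
      z ^ (m' + 1) * (Complex.exp (θ z + auxL a z) * c) :=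
    hfeq2.deriv_eq.trans hFd.deriv
  -- bound ‖c‖
  have hgz : ‖deriv g z / (R : ℂ)‖ ≤ M / R := by
    rw [norm_div, Complex.norm_real, Real.norm_eq_abs, abs_of_pos hRpos]
    gcongr
    exact hMb z (Metric.ball_subset_closedBall hzU)
  have hLb : ‖deriv (auxL a) z‖ ≤ S := by
    have h1 := hLder z hzU
    have h2 : Summable fun n => ‖deriv (auxl a n) z‖ :=
      Summable.of_nonneg_of_le (fun n => norm_nonneg _) (fun n => hldb n z hzU) hSsum
    calc ‖deriv (auxL a) z‖ = ‖∑' n, deriv (auxl a n) z‖ := by rw [h1.tsum_eq]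
      _ ≤ ∑' n, ‖deriv (auxl a n) z‖ := norm_tsum_le_tsum_norm h2
      _ ≤ ∑' n, 1 / (h n - t) := Summable.tsum_le_tsum (fun n => hldb n z hzU) h2 hSsum
      _ = S := rfl
  have hcb : ‖c‖ ≤ M / R + S := (norm_add_le _ _).trans (add_le_add hgz hLb)
  have hMRS : 0 < M / R + S := by positivity
  have hzc : ‖z * c‖ < ((m' : ℝ) + 1) := by
    have h1 : ‖z * c‖ ≤ ‖z‖ * (M / R + S) := by
      rw [norm_mul]
      exact mul_le_mul_of_nonneg_left hcb (norm_nonneg z)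
    have h2 : ‖z‖ * (M / R + S) < t * (M / R + S) := by
      apply mul_lt_mul_of_pos_right _ hMRS
      exact hzt
    have h3 : t * (M / R + S) = ((m' : ℝ) + 1) / 2 := by
      rw [hMR]
      have hm1 : ((m' + 1 : ℕ) : ℝ) = (m' : ℝ) + 1 := by push_cast; ring
      rw [hm1] at *
      field_simp
      ring
    have h4 : ((m' : ℝ) + 1) / 2 < (m' : ℝ) + 1 := by
      have : (0 : ℝ) < (m' : ℝ) + 1 := by positivity
      linarith
    calc ‖z * c‖ ≤ ‖z‖ * (M / R + S) := h1
      _ < t * (M / R + S) := h2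
      _ = ((m' : ℝ) + 1) / 2 := h3
      _ < (m' : ℝ) + 1 := h4
  have hlast : ((m' : ℂ) + 1) + z * c ≠ 0 := by
    intro h0
    have h1 : z * c = -((m' : ℂ) + 1) := by linear_combination h0
    have h2 : ‖z * c‖ = (m' : ℝ) + 1 := by
      rw [h1, norm_neg]
      have : ((m' : ℂ) + 1) = ((m' + 1 : ℕ) : ℂ) := by push_cast; ring
      rw [this, Complex.norm_natCast]
      push_cast; ring
    rw [h2] at hzc
    exact lt_irrefl _ hzc
  rw [hderiv]
  have hfact : (↑(m' + 1) * z ^ (m' + 1 - 1)) * Complex.exp (θ z + auxL a z) +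
      z ^ (m' + 1) * (Complex.exp (θ z + auxL a z) * c) =
      Complex.exp (θ z + auxL a z) * z ^ m' * (((m' : ℂ) + 1) + z * c) := by
    simp only [Nat.add_sub_cancel, pow_succ]
    push_cast
    ring
  rw [hfact]
  exact mul_ne_zero (mul_ne_zero (Complex.exp_ne_zero _) (pow_ne_zero _ hzne)) hlast
end

section
/- Let g be an entire function and let (a_n)_{n≥1} be a sequence of nonzero complex numbers such that |a_n|/h(n) → 1 as n → +∞, for some function h : ℕ → ℝ⁺ with ∑_{n=1}^∞ 1/h(n) < +∞. Let t > 0 and c > 1 satisfy |a_n| > c·t for all n. Then there exists a positive integer m_0 such that for every integer m ≥ m_0 there exists a constant L_0 > 0 such that for every real number L ≥ L_0, the entire function f(z) := z^m·e^{g(z)/L}·∏_{n=1}^∞ E_n(z/a_n) has no critical point in B(0,t) \ {0}; that is, f'(z) ≠ 0 for all z with 0 < |z| < t. -/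
lemma logTaylor_neg_aux (n : ℕ) (w : ℂ) :
    Complex.logTaylor (n + 2) (-w) = -∑ j ∈ Finset.range (n + 1), w ^ (j + 1) / (j + 1) := by
  rw [Complex.logTaylor]
  have key : ∀ j : ℕ, (-1:ℂ)^(j+1) * (-w)^j / j = -(w^j / (j:ℂ)) := by
    intro j
    have : ((-1:ℂ))^(j+1) * (-w)^j = -(w^j) := by
      rw [pow_succ, mul_comm ((-1:ℂ)^j) (-1), mul_assoc, ← mul_pow, neg_one_mul,
        neg_mul_neg, one_mul]
    rw [this, neg_div]
  simp_rw [key]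
  rw [← Finset.sum_neg_distrib, Finset.sum_range_succ' (fun j => -(w ^ j / (j:ℂ))) (n+1)]
  push_cast
  simp

lemma geom_aux (n : ℕ) (w : ℂ) (h1 : (1:ℂ) - w ≠ 0) (h2 : w ≠ 1) (a : ℂ) :
    -((1:ℂ) - w)⁻¹ * a⁻¹ + (∑ j ∈ Finset.range (n+1), w ^ j) * a⁻¹
      = -(w ^ (n+1)) * ((1:ℂ) - w)⁻¹ * a⁻¹ := by
  rw [geom_sum_eq h2, div_eq_mul_inv, ← neg_sub 1 w, inv_neg, mul_neg]
  have : (w ^ (n+1) - 1) * (1 - w)⁻¹ = -(1 - w ^ (n+1)) * (1 - w)⁻¹ := by ring_nf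
  rw [this]
  have key : -((1:ℂ) - w)⁻¹ + (1 - w ^ (n+1)) * (1 - w)⁻¹ = -(w ^ (n+1)) * (1 - w)⁻¹ := by
    rw [sub_mul, one_mul, neg_mul]
    ring
  calc -((1:ℂ) - w)⁻¹ * a⁻¹ + - (-(1 - w ^ (n+1)) * (1 - w)⁻¹) * a⁻¹
      = (-((1:ℂ) - w)⁻¹ + (1 - w ^ (n+1)) * (1 - w)⁻¹) * a⁻¹ := by ring
    _ = -(w ^ (n+1)) * (1 - w)⁻¹ * a⁻¹ := by rw [key]

theorem no_critical_points_asymptotic (g : ℂ → ℂ) (hg : Differentiable ℂ g)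
    (a : ℕ → ℂ) (ha : ∀ n, a n ≠ 0)
    (h : ℕ → ℝ) (hhpos : ∀ n, 0 < h n)
    (hasim : Filter.Tendsto (fun n => ‖a n‖ / h n) Filter.atTop (nhds 1))
    (hhsum : Summable (fun n => 1 / h n))
    (t c : ℝ) (ht : 0 < t) (hc : 1 < c) (hat : ∀ n, c * t < ‖a n‖) :
    ∃ m₀ : ℕ, 0 < m₀ ∧ ∀ m : ℕ, m₀ ≤ m → ∃ L₀ : ℝ, 0 < L₀ ∧ ∀ L : ℝ, L₀ ≤ L →
      ∀ z : ℂ, 0 < ‖z‖ → ‖z‖ < t →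
        deriv (fun w : ℂ => w ^ m * Complex.exp (g w / (L : ℂ)) *
          ∏' n, weierstrassE (n + 1) (w / a n)) z ≠ 0 := by
  have hc0 : (0:ℝ) < c := lt_trans one_pos hc
  have hct : (0:ℝ) < c * t := mul_pos hc0 ht
  obtain ⟨r, hr_def⟩ : ∃ r : ℝ, r = 1 / c := ⟨_, rfl⟩
  have hr0 : 0 < r := by rw [hr_def]; positivity
  have hr1 : r < 1 := by rw [hr_def, div_lt_one hc0]; exact hc
  have hr1' : (0:ℝ) < 1 - r := by linarith
  -- the norm of z / a n on the ball
  have hw : ∀ z : ℂ, ‖z‖ < t → ∀ n, ‖z / a n‖ ≤ r := by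
    intro z hz n
    rw [norm_div]
    calc ‖z‖ / ‖a n‖ ≤ t / (c * t) :=
          div_le_div₀ ht.le hz.le hct (hat n).le
      _ = r := by rw [hr_def, mul_comm, ← div_div, div_self ht.ne']
  clear hr_def
  have hone : ∀ z : ℂ, ‖z‖ < t → ∀ n, 1 - r ≤ ‖(1:ℂ) - z / a n‖ := by
    intro z hz n
    calc (1:ℝ) - r = ‖(1:ℂ)‖ - r := by simp
      _ ≤ ‖(1:ℂ)‖ - ‖z / a n‖ := by linarith [hw z hz n]
      _ ≤ ‖(1:ℂ) - z / a n‖ := norm_sub_norm_le _ _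
  have honens : ∀ z : ℂ, ‖z‖ < t → ∀ n, (1:ℂ) - z / a n ≠ 0 := by
    intro z hz n hzero
    have := hone z hz n
    rw [hzero] at this
    simp at this
    linarith
  have hwne1 : ∀ z : ℂ, ‖z‖ < t → ∀ n, z / a n ≠ 1 := by
    intro z hz n h1
    exact honens z hz n (by rw [h1]; ring)
  -- terms of the log series and their derivatives
  obtain ⟨term, hterm_def⟩ : ∃ f : ℕ → ℂ → ℂ, f = fun n z =>
      Complex.log (1 - z / a n) + ∑ j ∈ Finset.range (n+1), (z / a n) ^ (j+1) / (j+1) :=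
    ⟨_, rfl⟩
  obtain ⟨term', hterm'_def⟩ : ∃ f : ℕ → ℂ → ℂ, f = fun n z =>
      -((1:ℂ) - z / a n)⁻¹ * (a n)⁻¹ + (∑ j ∈ Finset.range (n+1), (z / a n) ^ j) * (a n)⁻¹ :=
    ⟨_, rfl⟩
  -- bounds
  obtain ⟨u, hu_def⟩ : ∃ f : ℕ → ℝ, f = fun n => r ^ n * (r ^ 2 * (1 - r)⁻¹) := ⟨_, rfl⟩
  obtain ⟨u', hu'_def⟩ : ∃ f : ℕ → ℝ, f = fun n => r ^ n * (r * ((1 - r)⁻¹ * (c * t)⁻¹)) :=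
    ⟨_, rfl⟩
  have hu_sum : Summable u := by
    rw [hu_def]; exact (summable_geometric_of_lt_one hr0.le hr1).mul_right _
  have hu'_sum : Summable u' := by
    rw [hu'_def]; exact (summable_geometric_of_lt_one hr0.le hr1).mul_right _
  -- bound on the terms
  have hterm_bound : ∀ n, ∀ z : ℂ, ‖z‖ < t → ‖term n z‖ ≤ u n := by
    intro n z hz
    have hwr : ‖z / a n‖ ≤ r := hw z hz n
    have hwn : ‖-(z / a n)‖ < 1 := by
      rw [norm_neg]; exact lt_of_le_of_lt hwr hr1
    have key := Complex.norm_log_sub_logTaylor_le (n + 1) hwn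
    have heq : term n z
        = Complex.log (1 + -(z / a n)) - Complex.logTaylor (n + 2) (-(z / a n)) := by
      simp only [hterm_def]
      rw [logTaylor_neg_aux, sub_neg_eq_add, ← sub_eq_add_neg]
    rw [heq]
    refine le_trans key ?_
    rw [norm_neg]
    have hinv0 : (0:ℝ) ≤ (1 - ‖z / a n‖)⁻¹ := by
      apply inv_nonneg.mpr; linarith
    have hXnn : (0:ℝ) ≤ ‖z / a n‖ ^ (n + 1 + 1) * (1 - ‖z / a n‖)⁻¹ :=
      mul_nonneg (pow_nonneg (norm_nonneg _) _) hinv0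
    have h1 : ‖z / a n‖ ^ (n + 1 + 1) ≤ r ^ (n + 1 + 1) :=
      pow_le_pow_left₀ (norm_nonneg _) hwr _
    have h2 : (1 - ‖z / a n‖)⁻¹ ≤ (1 - r)⁻¹ := by
      apply inv_anti₀ hr1'
      linarith
    calc ‖z / a n‖ ^ (n + 1 + 1) * (1 - ‖z / a n‖)⁻¹ / (↑(n + 1) + 1)
        ≤ ‖z / a n‖ ^ (n + 1 + 1) * (1 - ‖z / a n‖)⁻¹ :=
          div_le_self hXnn (by push_cast; linarith)
      _ ≤ r ^ (n + 1 + 1) * (1 - r)⁻¹ :=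
          mul_le_mul h1 h2 hinv0 (by positivity)
      _ = u n := by rw [hu_def]; ring
  -- derivatives
  have hterm_deriv : ∀ n, ∀ y : ℂ, ‖y‖ < t → HasDerivAt (term n) (term' n y) y := by
    intro n y hy
    have hinner : HasDerivAt (fun z : ℂ => 1 - z / a n) (-(a n)⁻¹) y := by
      simpa [one_div] using ((hasDerivAt_id y).div_const (a n)).const_sub 1
    have hmem : (1:ℂ) - y / a n ∈ Complex.slitPlane := by
      have := Complex.mem_slitPlane_of_norm_lt_one (z := -(y / a n))
        (by rw [norm_neg]; exact lt_of_le_of_lt (hw y hy n) hr1)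
      rwa [← sub_eq_add_neg] at this
    have hlog : HasDerivAt (fun z : ℂ => Complex.log (1 - z / a n))
        (((1:ℂ) - y / a n)⁻¹ * -(a n)⁻¹) y :=
      by have := (Complex.hasDerivAt_log hmem).comp y hinner; exact this
    have hpoly : HasDerivAt (fun z : ℂ => ∑ j ∈ Finset.range (n+1), (z / a n) ^ (j+1) / (j+1))
        (∑ j ∈ Finset.range (n+1), (y / a n) ^ j * (a n)⁻¹) y := by
      apply HasDerivAt.fun_sum
      intro j _
      have hid : HasDerivAt (fun z : ℂ => z / a n) ((a n)⁻¹) y := by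
        simpa [one_div] using (hasDerivAt_id y).div_const (a n)
      have hj : ((j:ℂ) + 1) ≠ 0 := Nat.cast_add_one_ne_zero j
      have := (hid.fun_pow (j+1)).div_const ((j:ℂ) + 1)
      refine this.congr_deriv (Eq.symm ?_)
      rw [Nat.add_sub_cancel, eq_div_iff hj]
      push_cast
      ring
    have := hlog.add hpoly
    have hsum_eq : term' n y = ((1:ℂ) - y / a n)⁻¹ * -(a n)⁻¹
        + ∑ j ∈ Finset.range (n+1), (y / a n) ^ j * (a n)⁻¹ := by
      simp only [hterm'_def]
      rw [← Finset.sum_mul]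
      ring
    rw [hterm_def] at *
    rw [hsum_eq]
    exact this
  have hterm'_bound : ∀ n, ∀ y : ℂ, ‖y‖ < t → ‖term' n y‖ ≤ u' n := by
    intro n y hy
    have hkey : term' n y = -((y / a n) ^ (n+1)) * ((1:ℂ) - y / a n)⁻¹ * (a n)⁻¹ := by
      simp only [hterm'_def]
      exact geom_aux n (y / a n) (honens y hy n) (hwne1 y hy n) (a n)
    rw [hkey]
    rw [norm_mul, norm_mul, norm_neg, norm_pow, norm_inv, norm_inv]
    have h1 : ‖y / a n‖ ^ (n+1) ≤ r ^ (n+1) := pow_le_pow_left₀ (norm_nonneg _) (hw y hy n) _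
    have h2 : ‖(1:ℂ) - y / a n‖⁻¹ ≤ (1 - r)⁻¹ :=
      inv_anti₀ hr1' (hone y hy n)
    have h3 : ‖a n‖⁻¹ ≤ (c * t)⁻¹ := by
      apply inv_anti₀ hct
      exact (hat n).le
    have hinv1 : (0:ℝ) ≤ ‖(1:ℂ) - y / a n‖⁻¹ := inv_nonneg.mpr (norm_nonneg _)
    calc ‖y / a n‖ ^ (n+1) * ‖(1:ℂ) - y / a n‖⁻¹ * ‖a n‖⁻¹
        ≤ r ^ (n+1) * (1 - r)⁻¹ * (c * t)⁻¹ := by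
          apply mul_le_mul (mul_le_mul h1 h2 hinv1 (by positivity)) h3
            (inv_nonneg.mpr (norm_nonneg _)) (by positivity)
      _ = u' n := by rw [hu'_def]; ring
  -- the sum function
  obtain ⟨S, hS_def⟩ : ∃ f : ℂ → ℂ, f = fun z => ∑' n, term n z := ⟨_, rfl⟩
  obtain ⟨S', hS'_def⟩ : ∃ f : ℂ → ℂ, f = fun z => ∑' n, term' n z := ⟨_, rfl⟩
  have hterm0 : ∀ n, term n 0 = 0 := by
    intro n
    simp [hterm_def]
  have hS_deriv : ∀ z : ℂ, ‖z‖ < t → HasDerivAt S (S' z) z := by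
    intro z hz
    rw [hS_def, hS'_def]
    apply hasDerivAt_tsum_of_isPreconnected hu'_sum Metric.isOpen_ball
      (convex_ball (0:ℂ) t).isPreconnected
      (fun n y hy => hterm_deriv n y
        (by rwa [Metric.mem_ball, dist_zero_right] at hy))
      (fun n y hy => hterm'_bound n y
        (by rwa [Metric.mem_ball, dist_zero_right] at hy))
      (Metric.mem_ball_self ht)
      (by simp only [hterm0]; exact summable_zero)
      (by rwa [Metric.mem_ball, dist_zero_right])
  have hterm_summable : ∀ z : ℂ, ‖z‖ < t → Summable (fun n => term n z) := by
    intro z hz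
    exact Summable.of_norm_bounded hu_sum (fun n => hterm_bound n z hz)
  -- the product equals exp of the sum on the ball
  have hprod : ∀ z : ℂ, ‖z‖ < t →
      (∏' n, weierstrassE (n + 1) (z / a n)) = Complex.exp (S z) := by
    intro z hz
    have hsum : HasSum (fun n => term n z) (S z) := by
      rw [hS_def]; exact (hterm_summable z hz).hasSum
    have hp := hsum.cexp
    have hfun : (Complex.exp ∘ fun n => term n z) = fun n => weierstrassE (n + 1) (z / a n) := by
      funext n
      simp only [Function.comp_apply, hterm_def]
      rw [Complex.exp_add, Complex.exp_log (honens z hz n)]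
      rfl
    rw [hfun] at hp
    exact hp.tprod_eq
  -- bound the derivative of the sum
  have hC : ∃ C : ℝ, 0 ≤ C ∧ ∀ z : ℂ, ‖z‖ < t → ‖S' z‖ ≤ C := by
    refine ⟨∑' n, u' n, tsum_nonneg (fun n => by rw [hu'_def]; positivity), fun z hz => ?_⟩
    rw [hS'_def]
    have hsn : Summable (fun n => ‖term' n z‖) :=
      Summable.of_nonneg_of_le (fun n => norm_nonneg _) (fun n => hterm'_bound n z hz) hu'_sum
    calc ‖∑' n, term' n z‖ ≤ ∑' n, ‖term' n z‖ := norm_tsum_le_tsum_norm hsn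
      _ ≤ ∑' n, u' n := Summable.tsum_le_tsum (fun n => hterm'_bound n z hz) hsn hu'_sum
  obtain ⟨C, hC0, hCb⟩ := hC
  -- bound for deriv g on the closed ball
  have hM : ∃ M : ℝ, 0 ≤ M ∧ ∀ y : ℂ, ‖y‖ < t → ‖deriv g y‖ ≤ M := by
    have han : AnalyticOnNhd ℂ g Set.univ :=
      Complex.analyticOnNhd_univ_iff_differentiable.mpr hg
    have hcont : ContinuousOn (deriv g) (Metric.closedBall (0:ℂ) t) :=
      (han.deriv.continuousOn).mono (Set.subset_univ _)
    obtain ⟨M, hMb⟩ := (isCompact_closedBall (0:ℂ) t).exists_bound_of_continuousOn hcont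
    refine ⟨max M 0, le_max_right _ _, fun y hy => ?_⟩
    exact le_trans (hMb y (by
      rw [Metric.mem_closedBall, dist_zero_right]; exact hy.le))
      (le_max_left _ _)
  obtain ⟨M, hM0, hMb⟩ := hM
  -- choose m₀ and L₀
  refine ⟨⌈t * C⌉₊ + 1, Nat.succ_pos _, fun m hm => ⟨t * M + 1, by positivity, fun L hL => ?_⟩⟩
  intro z hz0 hzt
  have hL0 : (0:ℝ) < L := lt_of_lt_of_le (by positivity) hL
  -- rewrite deriv using EventuallyEq
  have hzball : z ∈ Metric.ball (0:ℂ) t := by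
    rw [Metric.mem_ball, dist_zero_right]; exact hzt
  have hev : (fun w : ℂ => w ^ m * Complex.exp (g w / (L : ℂ)) *
      ∏' n, weierstrassE (n + 1) (w / a n))
      =ᶠ[nhds z] (fun w : ℂ => w ^ m * Complex.exp (g w / (L : ℂ) + S w)) := by
    filter_upwards [Metric.isOpen_ball.mem_nhds hzball] with w hwb
    have hwt : ‖w‖ < t := by
      rwa [Metric.mem_ball, dist_zero_right] at hwb
    rw [hprod w hwt, Complex.exp_add, mul_assoc]
  rw [hev.deriv_eq]
  -- compute the derivative
  have hgd : HasDerivAt (fun w => g w / (L:ℂ)) (deriv g z / L) z := (hg z).hasDerivAt.div_const _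
  have hE : HasDerivAt (fun w : ℂ => Complex.exp (g w / (L:ℂ) + S w))
      (Complex.exp (g z / (L:ℂ) + S z) * (deriv g z / L + S' z)) z :=
    (hgd.add (hS_deriv z hzt)).cexp
  have hF : HasDerivAt (fun w : ℂ => w ^ m * Complex.exp (g w / (L:ℂ) + S w))
      ((m:ℂ) * z ^ (m-1) * Complex.exp (g z / (L:ℂ) + S z) +
        z ^ m * (Complex.exp (g z / (L:ℂ) + S z) * (deriv g z / L + S' z))) z :=
    (hasDerivAt_pow m z).mul hE
  rw [hF.deriv]
  -- now show it's nonzero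
  have hm1 : 1 ≤ m := le_trans (Nat.succ_le_succ (Nat.zero_le _)) hm
  have hzne : z ≠ 0 := by
    intro hzz
    rw [hzz] at hz0
    simp at hz0
  intro hcontra
  set D : ℂ := deriv g z / L + S' z with hD_def
  set E : ℂ := g z / (L:ℂ) + S z with hE_def
  have hfac : (m:ℂ) * z ^ (m-1) * Complex.exp E + z ^ m * (Complex.exp E * D)
      = z ^ (m-1) * Complex.exp E * ((m:ℂ) + z * D) := by
    have hpow : z ^ m = z ^ (m-1) * z := by
      rw [← pow_succ]
      congr 1
      omega
    rw [hpow]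
    ring
  rw [hfac] at hcontra
  have hne : z ^ (m-1) * Complex.exp E ≠ 0 :=
    mul_ne_zero (pow_ne_zero _ hzne) (Complex.exp_ne_zero _)
  have hmz : (m:ℂ) + z * D = 0 := by
    rcases mul_eq_zero.mp hcontra with h1 | h2
    · exact absurd h1 hne
    · exact h2
  have hmeq : (m:ℂ) = -(z * D) := by linear_combination hmz
  have hnorm : (m:ℝ) = ‖z * D‖ := by
    have := congrArg norm hmeq
    rwa [norm_neg, Complex.norm_natCast] at this
  -- bound ‖z * D‖ < m
  have hDb : ‖D‖ ≤ M / L + C := by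
    rw [hD_def]
    calc ‖deriv g z / (L:ℂ) + S' z‖ ≤ ‖deriv g z / (L:ℂ)‖ + ‖S' z‖ := norm_add_le _ _
      _ ≤ M / L + C := by
          apply add_le_add _ (hCb z hzt)
          rw [norm_div, Complex.norm_real, Real.norm_eq_abs, abs_of_pos hL0]
          exact div_le_div_of_nonneg_right (hMb z hzt) hL0.le
  have hzD : ‖z * D‖ ≤ t * (M / L + C) := by
    rw [norm_mul]
    apply mul_le_mul _ hDb (norm_nonneg _) ht.le
    exact hzt.le
  have hML : t * (M / L) < 1 := by
    rw [mul_div_assoc', div_lt_one hL0]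
    calc t * M < t * M + 1 := by linarith
      _ ≤ L := hL
  have htC : t * C ≤ (m:ℝ) - 1 := by
    have h1 : t * C ≤ (⌈t * C⌉₊ : ℝ) := Nat.le_ceil _
    have h2 : ((⌈t * C⌉₊ + 1 : ℕ) : ℝ) ≤ (m:ℝ) := Nat.cast_le.mpr hm
    push_cast at h2
    linarith
  have hfinal : ‖z * D‖ < m := by
    calc ‖z * D‖ ≤ t * (M / L + C) := hzD
      _ = t * (M / L) + t * C := by ring
      _ < 1 + ((m:ℝ) - 1) := add_lt_add_of_lt_of_le hML htC
      _ = m := by ring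
  rw [← hnorm] at hfinal
  exact absurd hfinal (lt_irrefl _)
end

section
/- The entire function f_1(z) := z^{13}·e^{z³/14 − z²/7}·∏_{n=1}^∞ E_n(z/n²) has no critical point in B(0, 9/10) \ {0}; that is, f_1'(z) ≠ 0 for every z ∈ ℂ with 0 < |z| < 9/10. -/
open Complex Finset

noncomputable def sTerm (n : ℕ) (w : ℂ) : ℂ :=
  Complex.log (1 - w / ((n:ℂ)+1)^2) +
    ∑ j ∈ Finset.range (n+1), (w / ((n:ℂ)+1)^2) ^ (j+1) / (j+1)

noncomputable def dTerm (n : ℕ) (w : ℂ) : ℂ :=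
  -((w / ((n:ℂ)+1)^2) ^ (n+1) / (1 - w / ((n:ℂ)+1)^2)) / ((n:ℂ)+1)^2

lemma abs_n1 (n : ℕ) : ‖(n:ℂ)+1‖ = (n:ℝ)+1 := by
  rw [show ((n:ℂ)+1) = ((n+1 : ℕ) : ℂ) by push_cast; ring, Complex.norm_natCast]
  push_cast; ring

lemma n1_ne (n : ℕ) : ((n:ℂ)+1)^2 ≠ 0 := by
  apply pow_ne_zero
  intro h
  have := abs_n1 n
  rw [h] at this
  simp at this
  nlinarith [Nat.cast_nonneg (α := ℝ) n]

lemma abs_x_le (n : ℕ) {w : ℂ} (hw : ‖w‖ ≤ 9/10) :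
    ‖w / ((n:ℂ)+1)^2‖ ≤ 9/10 / ((n:ℝ)+1)^2 := by
  rw [norm_div, norm_pow, abs_n1]
  have h2 : (0:ℝ) < ((n:ℝ)+1)^2 := by positivity
  exact div_le_div_of_nonneg_right hw h2.le |>.trans (le_refl _)

lemma abs_x_lt (n : ℕ) {w : ℂ} (hw : ‖w‖ < 9/10) :
    ‖w / ((n:ℂ)+1)^2‖ < 9/10 := by
  rw [norm_div, norm_pow, abs_n1]
  have h1 : (1:ℝ) ≤ ((n:ℝ)+1)^2 := by nlinarith [Nat.cast_nonneg (α := ℝ) n]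
  rw [div_lt_iff₀ (by positivity)]
  nlinarith [norm_nonneg w]

lemma one_sub_ne {x : ℂ} (hx : ‖x‖ < 1) : 1 - x ≠ 0 := by
  intro h
  have : x = 1 := by linear_combination -h
  rw [this] at hx; simp at hx

lemma one_sub_slit {x : ℂ} (hx : ‖x‖ < 1) : 1 - x ∈ Complex.slitPlane := by
  rw [Complex.mem_slitPlane_iff]
  left
  simp only [Complex.sub_re, Complex.one_re]
  linarith [le_abs_self x.re, Complex.abs_re_le_norm x]

lemma hasDerivAt_sTerm (n : ℕ) {w : ℂ} (hw : ‖w‖ < 9/10) :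
    HasDerivAt (sTerm n) (dTerm n w) w := by
  set c : ℂ := ((n:ℂ)+1)^2 with hc
  have hcne : c ≠ 0 := n1_ne n
  have hx : ‖w / c‖ < 9/10 := abs_x_lt n hw
  have hxlt1 : ‖w / c‖ < 1 := hx.trans (by norm_num)
  -- derivative of inner map w ↦ 1 - w/c
  have hinner : HasDerivAt (fun w : ℂ => 1 - w / c) (-(1/c)) w := by
    simpa using ((hasDerivAt_id w).div_const c).const_sub 1
  have hlog : HasDerivAt (fun w : ℂ => Complex.log (1 - w / c))
      (-(1/c) / (1 - w / c)) w :=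
    hinner.clog (one_sub_slit hxlt1)
  have hsum : HasDerivAt (fun w : ℂ => ∑ j ∈ Finset.range (n+1), (w / c) ^ (j+1) / (j+1))
      (∑ j ∈ Finset.range (n+1), (w / c) ^ j / c) w := by
    apply HasDerivAt.fun_sum
    intro j _
    have hj : ((j:ℂ)+1) ≠ 0 := Nat.cast_add_one_ne_zero j
    have h1 : HasDerivAt (fun w : ℂ => (w / c) ^ (j+1))
        (((j:ℂ)+1) * (w / c) ^ j * (1/c)) w := by
      have := ((hasDerivAt_id w).div_const c).fun_pow (j+1)
      simpa using this
    have := h1.div_const ((j:ℂ)+1)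
    refine this.congr_deriv ?_
    field_simp
  have hx1 : w / c ≠ 1 := by
    intro h; rw [h] at hxlt1; simp at hxlt1
  have hne : (1 : ℂ) - w / c ≠ 0 := one_sub_ne hxlt1
  have := hlog.fun_add hsum
  refine this.congr_deriv ?_
  symm
  rw [← Finset.sum_div, geom_sum_eq hx1]
  have hne2 : w / c - 1 ≠ 0 := fun h => hne (by linear_combination -h)
  show -((w/c)^(n+1)/(1 - w/c))/c = -(1/c)/(1 - w/c) + ((w/c)^(n+1) - 1)/(w/c - 1)/c
  generalize w / c = x at hne hne2 ⊢
  field_simp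
  ring

lemma pow_ge (n : ℕ) : (4:ℝ)^n ≤ ((n:ℝ)+1)^(2*n+4) := by
  cases n with
  | zero => norm_num
  | succ m =>
    push_cast
    have hA : (2:ℝ) ≤ ((m:ℝ)+1)+1 := by
      have := Nat.cast_nonneg (α := ℝ) m; linarith
    have h1 : (4:ℝ)^(m+1) = 2^(2*(m+1)) := by
      rw [pow_mul]; norm_num
    rw [h1]
    calc (2:ℝ)^(2*(m+1)) ≤ (((m:ℝ)+1)+1)^(2*(m+1)) := by
          apply pow_le_pow_left₀ (by norm_num) _
          push_cast; push_cast at hA; linarith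
      _ ≤ (((m:ℝ)+1)+1)^(2*(m+1)+4) := by
          apply pow_le_pow_right₀ (by linarith)
          omega

lemma dTerm_bound (n : ℕ) {w : ℂ} (hw : ‖w‖ < 9/10) :
    ‖dTerm n w‖ ≤ 9 * (1/4)^n := by
  set A : ℝ := (n:ℝ)+1 with hA
  have hA1 : (1:ℝ) ≤ A := by rw [hA]; have := Nat.cast_nonneg (α := ℝ) n; linarith
  have hApos : (0:ℝ) < A := by linarith
  set x : ℂ := w / ((n:ℂ)+1)^2 with hxdef
  have hxle : ‖x‖ ≤ 9/10 / A^2 := abs_x_le n hw.le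
  have hxle9 : ‖x‖ ≤ 9/10 := by
    have h2 : (1:ℝ) ≤ A^2 := by nlinarith
    exact hxle.trans (div_le_self (by norm_num) h2)
  have hlb : (1:ℝ)/10 ≤ ‖1 - x‖ := by
    have := norm_sub_norm_le (1:ℂ) x
    simp only [norm_one] at this
    linarith
  have habs : ‖dTerm n w‖ = ‖x‖ ^ (n+1) / ‖1-x‖ / A^2 := by
    simp only [dTerm, ← hxdef, norm_div, norm_neg, norm_pow,
      abs_n1, ← hA]
  rw [habs]
  have step1 : ‖x‖ ^ (n+1) / ‖1-x‖ / A^2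
      ≤ (9/10/A^2)^(n+1) / (1/10) / A^2 := by
    apply div_le_div_of_nonneg_right _ (by nlinarith)
    apply div_le_div₀ (by positivity) (pow_le_pow_left₀ (norm_nonneg x) hxle _)
      (by norm_num) hlb
  have step2 : (9/10/A^2)^(n+1) / (1/10) / A^2 = (9/10)^(n+1) * 10 / A^(2*n+4) := by
    rw [div_pow, ← pow_mul]
    have : A ^ (2*n+4) = A^(2*(n+1)) * A^2 := by rw [← pow_add]; ring_nf
    rw [this]
    field_simp
  have step3 : (9/10:ℝ)^(n+1) * 10 / A^(2*n+4) ≤ (9/10)^(n+1) * 10 / 4^n := by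
    apply div_le_div_of_nonneg_left (by positivity) (by positivity) (pow_ge n)
  have step4 : (9/10:ℝ)^(n+1) * 10 / 4^n ≤ 9 * (1/4)^n := by
    have h1 : (9/10:ℝ)^(n+1) ≤ 9/10 := by
      calc (9/10:ℝ)^(n+1) ≤ (9/10)^1 := by
            apply pow_le_pow_of_le_one (by norm_num) (by norm_num); omega
        _ = 9/10 := pow_one _
    have h2 : ((1:ℝ)/4)^n = 1/4^n := by rw [div_pow]; norm_num
    rw [h2, mul_one_div]
    rw [div_le_div_iff₀ (by positivity) (by positivity)]
    nlinarith [pow_pos (show (0:ℝ)<4 by norm_num) n]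
  exact step1.trans (step2.trans_le (step3.trans step4))

lemma summable_u : Summable (fun n : ℕ => 9 * (1/4:ℝ)^n) :=
  (summable_geometric_of_lt_one (by norm_num) (by norm_num)).mul_left 9

lemma tsum_u : ∑' n : ℕ, 9 * (1/4:ℝ)^n = 12 := by
  rw [tsum_mul_left, tsum_geometric_of_lt_one (by norm_num) (by norm_num)]
  norm_num

lemma sTerm_zero (n : ℕ) : sTerm n 0 = 0 := by
  simp [sTerm, Finset.sum_eq_zero, zero_pow (Nat.succ_ne_zero _)]

lemma summable_sTerm {w : ℂ} (hw : ‖w‖ < 9/10) :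
    Summable (fun n => sTerm n w) := by
  apply summable_of_summable_hasDerivAt_of_isPreconnected summable_u Metric.isOpen_ball
    (convex_ball (0:ℂ) (9/10)).isPreconnected
    (g' := dTerm)
    (fun n y hy => hasDerivAt_sTerm n (by rwa [Metric.mem_ball, dist_zero_right] at hy))
    (fun n y hy => dTerm_bound n (by rwa [Metric.mem_ball, dist_zero_right] at hy))
    (y₀ := 0) (by simp [Metric.mem_ball])
  · simp only [sTerm_zero]; exact summable_zero
  · rwa [Metric.mem_ball, dist_zero_right]

lemma hasDerivAt_S {z : ℂ} (hz : ‖z‖ < 9/10) :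
    HasDerivAt (fun w => ∑' n : ℕ, sTerm n w) (∑' n : ℕ, dTerm n z) z := by
  apply hasDerivAt_tsum_of_isPreconnected summable_u Metric.isOpen_ball
    (convex_ball (0:ℂ) (9/10)).isPreconnected
    (fun n y hy => hasDerivAt_sTerm n (by rwa [Metric.mem_ball, dist_zero_right] at hy))
    (fun n y hy => dTerm_bound n (by rwa [Metric.mem_ball, dist_zero_right] at hy))
    (y₀ := 0) (by simp [Metric.mem_ball])
  · simp only [sTerm_zero]; exact summable_zero
  · rwa [Metric.mem_ball, dist_zero_right]

lemma exp_sTerm (n : ℕ) {w : ℂ} (hw : ‖w‖ < 9/10) :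
    Complex.exp (sTerm n w) = weierstrassE (n+1) (w / ((n:ℂ)+1)^2) := by
  have hx : ‖w / ((n:ℂ)+1)^2‖ < 1 := (abs_x_lt n hw).trans (by norm_num)
  rw [sTerm, Complex.exp_add, Complex.exp_log (one_sub_ne hx), weierstrassE]

lemma tprod_eq_exp {w : ℂ} (hw : ‖w‖ < 9/10) :
    (∏' n : ℕ, weierstrassE (n + 1) (w / ((n : ℂ) + 1) ^ 2)) =
      Complex.exp (∑' n : ℕ, sTerm n w) := by
  have h := (summable_sTerm hw).hasSum.cexp
  have h2 : HasProd (fun n : ℕ => weierstrassE (n + 1) (w / ((n : ℂ) + 1) ^ 2))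
      (Complex.exp (∑' n : ℕ, sTerm n w)) := by
    have heq : (Complex.exp ∘ fun n : ℕ => sTerm n w)
        = fun n : ℕ => weierstrassE (n + 1) (w / ((n : ℂ) + 1) ^ 2) :=
      funext fun n => exp_sTerm n hw
    exact heq ▸ h
  exact h2.tprod_eq

theorem example_no_critical_points :
    ∀ z : ℂ, 0 < ‖z‖ → ‖z‖ < 9 / 10 →
      deriv (fun w : ℂ => w ^ 13 * Complex.exp (w ^ 3 / 14 - w ^ 2 / 7) *
        ∏' n : ℕ, weierstrassE (n + 1) (w / ((n : ℂ) + 1) ^ 2)) z ≠ 0 := by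
  intro z hz0 hzlt
  have hzne : z ≠ 0 := fun h => by simp [h] at hz0
  set D : ℂ := ∑' n : ℕ, dTerm n z with hD
  -- eventual equality with the exp form
  have hmem : Metric.ball (0:ℂ) (9/10) ∈ nhds z :=
    Metric.isOpen_ball.mem_nhds (by rwa [Metric.mem_ball, dist_zero_right])
  have heq : (fun w : ℂ => w ^ 13 * Complex.exp (w ^ 3 / 14 - w ^ 2 / 7) *
        ∏' n : ℕ, weierstrassE (n + 1) (w / ((n : ℂ) + 1) ^ 2))
      =ᶠ[nhds z] (fun w : ℂ => w ^ 13 * Complex.exp (w ^ 3 / 14 - w ^ 2 / 7) *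
        Complex.exp (∑' n : ℕ, sTerm n w)) := by
    filter_upwards [hmem] with w hw
    rw [tprod_eq_exp (by rwa [Metric.mem_ball, dist_zero_right] at hw)]
  rw [heq.deriv_eq]
  -- derivatives
  have h13 : HasDerivAt (fun w : ℂ => w ^ 13) (13 * z ^ 12) z := by
    simpa using hasDerivAt_pow 13 z
  have hG : HasDerivAt (fun w : ℂ => w ^ 3 / 14 - w ^ 2 / 7) (3 * z ^ 2 / 14 - 2 * z / 7) z := by
    have := ((hasDerivAt_pow 3 z).div_const 14).fun_sub ((hasDerivAt_pow 2 z).div_const 7)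
    refine this.congr_deriv ?_
    push_cast
    ring
  have hE1 := hG.cexp
  have hE2 := (hasDerivAt_S hzlt).cexp
  have hFd := (h13.fun_mul hE1).fun_mul hE2
  rw [hFd.deriv]
  -- the derivative value factors
  set EG : ℂ := Complex.exp (z ^ 3 / 14 - z ^ 2 / 7) with hEG
  set ES : ℂ := Complex.exp (∑' n : ℕ, sTerm n z) with hES
  have hfact : (13 * z ^ 12 * EG + z ^ 13 * (EG * (3 * z ^ 2 / 14 - 2 * z / 7))) * ES +
      z ^ 13 * EG * (ES * D) = z ^ 12 * EG * ES * (13 + z * ((3 * z ^ 2 / 14 - 2 * z / 7) + D)) := by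
    ring
  rw [hfact]
  -- bound |D| ≤ 12
  have hDbound : ‖D‖ ≤ 12 := by
    rw [hD, ← tsum_u]
    exact tsum_of_norm_bounded summable_u.hasSum (fun n => dTerm_bound n hzlt)
  -- final nonvanishing
  apply mul_ne_zero
  apply mul_ne_zero
  apply mul_ne_zero (pow_ne_zero _ hzne) (Complex.exp_ne_zero _)
  · exact Complex.exp_ne_zero _
  · intro h
    have h13' : z * ((3 * z ^ 2 / 14 - 2 * z / 7) + D) = -13 := by linear_combination h
    have habs : ‖z * ((3 * z ^ 2 / 14 - 2 * z / 7) + D)‖ = 13 := by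
      rw [h13']; simp
    set a : ℝ := ‖z‖ with ha
    have hGb : ‖3 * z ^ 2 / 14 - 2 * z / 7‖ ≤ 3 * a ^ 2 / 14 + 2 * a / 7 := by
      have t := norm_sub_le (3 * z ^ 2 / 14) (2 * z / 7)
      simp only [norm_div, norm_mul, norm_pow, Complex.norm_ofNat] at t
      convert t using 2 <;> ring
    have hle : ‖z * ((3 * z ^ 2 / 14 - 2 * z / 7) + D)‖ ≤ a * ((3 * a ^ 2 / 14 + 2 * a / 7) + 12) := by
      rw [norm_mul]
      apply mul_le_mul_of_nonneg_left _ (norm_nonneg z)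
      calc ‖(3 * z ^ 2 / 14 - 2 * z / 7) + D‖
          ≤ ‖3 * z ^ 2 / 14 - 2 * z / 7‖ + ‖D‖ := by
            simpa using norm_add_le (3 * z ^ 2 / 14 - 2 * z / 7) D
        _ ≤ (3 * a ^ 2 / 14 + 2 * a / 7) + 12 := add_le_add hGb hDbound
    rw [habs] at hle
    have ha9 : a < 9/10 := hzlt
    have ha0 : 0 ≤ a := norm_nonneg z
    nlinarith
end
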